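/- arXiv:2312.01976 — 8 statements merged into one kernel-verified Lean document; each statement's English description precedes it below -/
import Mathlib

section
/- Let p be an odd prime, s a positive integer, d(s) = ⌊ s(p−1)/(p−2) ⌋ + 1, and E_s(x) = Σ_{k=0}^{d(s)} x^k/k!. Then for every μ ∈ ℤ_p: every coefficient p^k μ^k / k! of the formal power series e^{pμx} lies in ℤ_p (so e^{pμx} ∈ ℤ_p[[x]]), E_s(pμx) ∈ ℤ_p[x], and e^{pμx} ≡ E_s(pμx) (mod p^s), i.e. every coefficient of the power series e^{pμx} − E_s(pμx) lies in p^s ℤ_p. -/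
/-!
The `k`-th coefficient of `e^{pμx}` is `(pμ)^k / k!`, of norm at most `p ^ (v_p(k!) - k)`.
Legendre's formula gives `(p - 1) v_p(k!) ≤ k`, so every coefficient is integral. For `k > d(s)`
we have `(p - 2) k > s (p - 1)`, which together with Legendre's bound yields `s + v_p(k!) ≤ k`:
the coefficients that the truncation drops are divisible by `p^s`.
-/

/-- `d(s) = ⌊s(p−1)/(p−2)⌋ + 1`. -/
def truncDeg (p s : ℕ) : ℕ := s * (p - 1) / (p - 2) + 1

/-- The truncated exponential `E_s(pμx) = Σ_{k=0}^{d(s)} (pμ)^k x^k / k!`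
as a polynomial in `x` with `ℚ_p` coefficients. -/
noncomputable def truncExp (p : ℕ) [Fact p.Prime] (s : ℕ) (μ : ℤ_[p]) : Polynomial ℚ_[p] :=
  ∑ k ∈ Finset.range (truncDeg p s + 1),
    Polynomial.C (((p : ℚ_[p]) * (μ : ℚ_[p])) ^ k / (k.factorial : ℚ_[p])) * Polynomial.X ^ k

open Nat

theorem PowerSeries.coeff_rescale_exp {K : Type*} [Field K] [CharZero K] (a : K) (n : ℕ) :
    coeff n (rescale a (exp K)) = a ^ n / n ! := by
  rw [coeff_rescale, coeff_exp, map_div₀, map_one, map_natCast, mul_one_div]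

theorem truncExp_coeff (p : ℕ) [Fact p.Prime] (s : ℕ) (μ : ℤ_[p]) (n : ℕ) :
    (truncExp p s μ).coeff n =
      if n ≤ truncDeg p s then ((p : ℚ_[p]) * (μ : ℚ_[p])) ^ n / (n ! : ℚ_[p]) else 0 := by
  simp [truncExp]

section

variable {p : ℕ} [Fact p.Prime]

theorem add_padicValNat_factorial_le (hp : p ≠ 2) {s n : ℕ} (hn : s * (p - 1) / (p - 2) < n) :
    s + padicValNat p n ! ≤ n := by
  have hp3 : 3 ≤ p := (Fact.out : p.Prime).two_le.lt_of_ne' hp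
  have hsn : s * (p - 1) < n * (p - 2) := (Nat.div_lt_iff_lt_mul (by omega)).mp hn
  have hlegendre : (p - 1) * padicValNat p n ! ≤ n :=
    sub_one_mul_padicValNat_factorial (p := p) n ▸ Nat.sub_le _ _
  refine Nat.le_of_mul_le_mul_left ?_ (by omega : 0 < p - 1)
  calc (p - 1) * (s + padicValNat p n !) = s * (p - 1) + (p - 1) * padicValNat p n ! := by ring
    _ ≤ n * (p - 2) + n := by omega
    _ = (p - 1) * n := by rw [show p - 1 = p - 2 + 1 by omega]; ring

theorem Padic.norm_natCast_factorial (n : ℕ) :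
    ‖(n ! : ℚ_[p])‖ = (p : ℝ) ^ (-(padicValNat p n ! : ℤ)) := by
  rw [Padic.norm_eq_zpow_neg_valuation (mod_cast n.factorial_ne_zero), Padic.valuation_natCast]

theorem Padic.norm_p_mul_pow_div_factorial_le {x : ℚ_[p]} (hx : ‖x‖ ≤ 1) (n : ℕ) :
    ‖((p : ℚ_[p]) * x) ^ n / (n ! : ℚ_[p])‖ ≤ (p : ℝ) ^ (-((n : ℤ) - padicValNat p n !)) := by
  have hp : (0 : ℝ) < p := mod_cast (Fact.out : p.Prime).pos
  rw [norm_div, norm_pow, norm_mul, Padic.norm_p, Padic.norm_natCast_factorial,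
    div_le_iff₀ (zpow_pos hp _), ← zpow_add₀ hp.ne', show -((n : ℤ) - padicValNat p n !) +
      -(padicValNat p n ! : ℤ) = -n by ring, zpow_neg, zpow_natCast, ← inv_pow, mul_pow]
  exact mul_le_of_le_one_right (by positivity) (pow_le_one₀ (norm_nonneg x) hx)

theorem Padic.norm_p_mul_pow_div_factorial_le_one {x : ℚ_[p]} (hx : ‖x‖ ≤ 1) (n : ℕ) :
    ‖((p : ℚ_[p]) * x) ^ n / (n ! : ℚ_[p])‖ ≤ 1 := by
  refine (norm_p_mul_pow_div_factorial_le hx n).trans (zpow_le_one_of_nonpos₀ ?_ ?_)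
  · exact_mod_cast (Fact.out : p.Prime).one_le
  · have := padicValNat_factorial_le p n
    omega

theorem Padic.norm_p_mul_pow_div_factorial_le_of_truncDeg_lt (hp : p ≠ 2) {x : ℚ_[p]}
    (hx : ‖x‖ ≤ 1) {s n : ℕ} (hn : truncDeg p s < n) :
    ‖((p : ℚ_[p]) * x) ^ n / (n ! : ℚ_[p])‖ ≤ (p : ℝ) ^ (-(s : ℤ)) := by
  refine (norm_p_mul_pow_div_factorial_le hx n).trans (zpow_le_zpow_right₀ ?_ ?_)
  · exact_mod_cast (Fact.out : p.Prime).one_le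
  · have := add_padicValNat_factorial_le hp (s := s) (n := n) (by unfold truncDeg at hn; omega)
    omega

end

theorem truncExp_congr_exp_general
    (p : ℕ) [Fact p.Prime] (hodd : p ≠ 2) (s : ℕ) (μ : ℤ_[p]) :
    (∀ k : ℕ, ‖PowerSeries.coeff k
        (PowerSeries.rescale ((p : ℚ_[p]) * (μ : ℚ_[p])) (PowerSeries.exp ℚ_[p]))‖ ≤ 1) ∧
    (∀ k : ℕ, ‖(truncExp p s μ).coeff k‖ ≤ 1) ∧
    (∀ k : ℕ, ‖PowerSeries.coeff k
        (PowerSeries.rescale ((p : ℚ_[p]) * (μ : ℚ_[p])) (PowerSeries.exp ℚ_[p]))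
        - (truncExp p s μ).coeff k‖ ≤ (p : ℝ) ^ (-(s : ℤ))) := by
  have hμ : ‖(μ : ℚ_[p])‖ ≤ 1 := μ.norm_le_one
  refine ⟨fun k => ?_, fun k => ?_, fun k => ?_⟩
  · rw [PowerSeries.coeff_rescale_exp]
    exact Padic.norm_p_mul_pow_div_factorial_le_one hμ k
  · rw [truncExp_coeff]
    split_ifs
    · exact Padic.norm_p_mul_pow_div_factorial_le_one hμ k
    · simp
  · rw [PowerSeries.coeff_rescale_exp, truncExp_coeff]
    split_ifs with hk
    · simp only [sub_self, norm_zero]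
      positivity
    · rw [sub_zero]
      exact Padic.norm_p_mul_pow_div_factorial_le_of_truncDeg_lt hodd hμ (not_le.mp hk)

/-- **Lemma on the truncated exponential (EV2).** Let `p` be an odd prime, `s ≥ 1`,
`d(s) = ⌊s(p−1)/(p−2)⌋ + 1`, `E_s(x) = Σ_{k=0}^{d(s)} x^k/k!`, and `μ ∈ ℤ_p`. Then
every coefficient of the power series `e^{pμx}` lies in `ℤ_p` (it belongs to `ℤ_p[[x]]`),
every coefficient of `E_s(pμx)` lies in `ℤ_p` (it belongs to `ℤ_p[x]`), and
`e^{pμx} ≡ E_s(pμx) (mod p^s)`: every coefficient of the difference lies in `p^s ℤ_p`. -/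
theorem truncExp_congr_exp
    (p : ℕ) [Fact p.Prime] (hodd : p ≠ 2) (s : ℕ) (hs : 0 < s) (μ : ℤ_[p]) :
    (∀ k : ℕ, ‖PowerSeries.coeff k
        (PowerSeries.rescale ((p : ℚ_[p]) * (μ : ℚ_[p])) (PowerSeries.exp ℚ_[p]))‖ ≤ 1) ∧
    (∀ k : ℕ, ‖(truncExp p s μ).coeff k‖ ≤ 1) ∧
    (∀ k : ℕ, ‖PowerSeries.coeff k
        (PowerSeries.rescale ((p : ℚ_[p]) * (μ : ℚ_[p])) (PowerSeries.exp ℚ_[p]))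
        - (truncExp p s μ).coeff k‖ ≤ (p : ℝ) ^ (-(s : ℤ))) :=
  truncExp_congr_exp_general p hodd s μ
end

section
/- Let p be an odd prime, s a positive integer, d(s) = ⌊ s(p−1)/(p−2) ⌋ + 1, and E_s(x) = Σ_{k=0}^{d(s)} x^k/k!. Treating μ, x, u, v as polynomial variables over ℤ_p, the following congruences of polynomials hold modulo p^s: (∂/∂x) E_s(pμx) ≡ pμ E_s(pμx), (∂/∂μ) E_s(pμx) ≡ px E_s(pμx) in ℤ_p[μ,x], and E_s(pμ(u+v)) ≡ E_s(pμu)·E_s(pμv) in ℤ_p[μ,u,v]. -/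
open MvPolynomial

/-- `E_s(pμx)` as a polynomial in the two variables `μ = X 0`, `x = X 1` over `ℚ_p`. -/
noncomputable def truncExpMuX (p : ℕ) [Fact p.Prime] (s : ℕ) : MvPolynomial (Fin 2) ℚ_[p] :=
  ∑ k ∈ Finset.range (truncDeg p s + 1),
    C ((p : ℚ_[p]) ^ k / (k.factorial : ℚ_[p])) * (X 0 * X 1) ^ k

/-- `E_s(pμ(u+v))` as a polynomial in `μ = X 0`, `u = X 1`, `v = X 2` over `ℚ_p`. -/
noncomputable def truncExpMuUV (p : ℕ) [Fact p.Prime] (s : ℕ) : MvPolynomial (Fin 3) ℚ_[p] :=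
  ∑ k ∈ Finset.range (truncDeg p s + 1),
    C ((p : ℚ_[p]) ^ k / (k.factorial : ℚ_[p])) * (X 0 * (X 1 + X 2)) ^ k

/-- `E_s(pμu)` (resp. `E_s(pμv)`) as a polynomial in `μ = X 0`, `u = X 1`, `v = X 2`. -/
noncomputable def truncExpMuU (p : ℕ) [Fact p.Prime] (s : ℕ) (i : Fin 3) :
    MvPolynomial (Fin 3) ℚ_[p] :=
  ∑ k ∈ Finset.range (truncDeg p s + 1),
    C ((p : ℚ_[p]) ^ k / (k.factorial : ℚ_[p])) * (X 0 * X i) ^ k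

/-!
Write `c_k = p^k / k!` and `d = d(s)`. Differentiating `E_s(pμx)` reproduces `pμ E_s(pμx)` up
to the top term alone, because `(k + 1) c_{k+1} = p c_k`; and `E_s(t + u) - E_s(t) E_s(u)` is
minus the sum of `c_i c_j t^i u^j` over `i, j ≤ d < i + j`. Every coefficient left over is an
integer multiple of some `c_k` with `k > d`, and Legendre's formula `(p - 1) v_p(k!) ≤ k` together
with the choice of `d` gives `v_p(c_k) = k - v_p(k!) ≥ s`. Substituting products of variables for
`t` and `u` keeps the coefficients in `p^s ℤ_p` because the norm is ultrametric.
-/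

open Finset

theorem Finset.Nat.sum_range_sum_antidiagonal {M : Type*} [AddCommMonoid M] (f : ℕ × ℕ → M)
    (n : ℕ) :
    ∑ k ∈ range (n + 1), ∑ x ∈ antidiagonal k, f x =
      ∑ x ∈ range (n + 1) ×ˢ range (n + 1) with x.1 + x.2 ≤ n, f x := by
  rw [← sum_fiberwise_of_maps_to (g := fun x : ℕ × ℕ => x.1 + x.2) (t := range (n + 1))
    (fun x hx => by simp only [mem_filter] at hx; exact mem_range.2 (by omega))]
  refine sum_congr rfl fun k hk => sum_congr ?_ fun _ _ => rfl
  ext x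
  simp only [mem_range] at hk
  simp only [HasAntidiagonal.mem_antidiagonal, mem_filter, mem_product, mem_range]
  omega

section Factorial

variable {K : Type*} [Field K] [CharZero K]

theorem mul_pow_div_factorial (a : K) (n : ℕ) :
    a * (a ^ n / n.factorial) = (n + 1 : ℕ) * (a ^ (n + 1) / (n + 1).factorial) := by
  rw [Nat.factorial_succ]
  push_cast
  field_simp
  ring

theorem pow_div_factorial_mul_pow_div_factorial (a : K) (i j : ℕ) :
    a ^ i / i.factorial * (a ^ j / j.factorial) =
      (i + j).choose i * (a ^ (i + j) / (i + j).factorial) := by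
  have : ((i + j).factorial : K) ≠ 0 := Nat.cast_ne_zero.2 (Nat.factorial_ne_zero _)
  rw [Nat.cast_add_choose]
  field_simp
  ring

end Factorial

theorem IsUltrametricDist.norm_natCast_mul_le {R : Type*} [SeminormedRing R] [NormOneClass R]
    [IsUltrametricDist R] (n : ℕ) (x : R) : ‖(n : R) * x‖ ≤ ‖x‖ :=
  (norm_mul_le _ _).trans (mul_le_of_le_one_left (norm_nonneg _) (norm_natCast_le_one R n))

section Padic

variable {p : ℕ} [hp : Fact p.Prime]

theorem padicValNat_factorial_add_le (hodd : p ≠ 2) {s k : ℕ} (hk : truncDeg p s < k) :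
    padicValNat p k.factorial + s ≤ k := by
  have hp3 : 3 ≤ p := by have := hp.out.two_le; omega
  have hlegendre : (p - 1) * padicValNat p k.factorial ≤ k := by
    rw [sub_one_mul_padicValNat_factorial]
    exact Nat.sub_le _ _
  have hdeg : s * (p - 1) < k * (p - 2) := by
    rw [truncDeg] at hk
    exact ((Nat.div_lt_iff_lt_mul (by omega)).1 (by omega : _ < k - 1)).trans_le
      (Nat.mul_le_mul_right _ (Nat.sub_le _ _))
  obtain ⟨q, rfl⟩ : ∃ q, p = q + 3 := ⟨p - 3, by omega⟩
  simp only [show q + 3 - 1 = q + 2 by omega, show q + 3 - 2 = q + 1 by omega] at hlegendre hdeg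
  nlinarith

theorem norm_pow_div_factorial_le (hodd : p ≠ 2) {s k : ℕ} (hk : truncDeg p s < k) :
    ‖(p : ℚ_[p]) ^ k / k.factorial‖ ≤ (p : ℝ) ^ (-(s : ℤ)) := by
  have hfac : (k.factorial : ℚ_[p]) ≠ 0 := Nat.cast_ne_zero.2 (Nat.factorial_ne_zero _)
  rw [norm_div, Padic.norm_p_pow, Padic.norm_eq_zpow_neg_valuation hfac, Padic.valuation_natCast,
    ← zpow_sub₀ (by exact_mod_cast hp.out.ne_zero)]
  have := padicValNat_factorial_add_le hodd hk
  exact zpow_le_zpow_right₀ (by exact_mod_cast hp.out.one_lt.le) (by omega)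

end Padic

namespace MvPolynomial

variable {σ : Type*}

section CoeffsNormLE

variable {R : Type*} [NormedCommRing R]

-- Over `ℚ_[p]` with `ε = p ^ (-s)` this says that `f` has coefficients in `p ^ s ℤ_[p]`.
def CoeffsNormLE (ε : ℝ) (f : MvPolynomial σ R) : Prop := ∀ m, ‖f.coeff m‖ ≤ ε

variable {ε δ : ℝ} {f g : MvPolynomial σ R}

theorem CoeffsNormLE.nonneg (hf : CoeffsNormLE ε f) : 0 ≤ ε :=
  (norm_nonneg _).trans (hf 0)

theorem CoeffsNormLE.neg (hf : CoeffsNormLE ε f) : CoeffsNormLE ε (-f) :=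
  fun m => by simpa using hf m

theorem CoeffsNormLE.C_mul {b : R} (hb : ‖b‖ ≤ ε) (hf : CoeffsNormLE 1 f) :
    CoeffsNormLE ε (C b * f) := fun m => by
  rw [coeff_C_mul]
  exact (norm_mul_le _ _).trans
    (by simpa using mul_le_mul hb (hf m) (norm_nonneg _) ((norm_nonneg _).trans hb))

theorem coeffsNormLE_one [NormOneClass R] : CoeffsNormLE 1 (1 : MvPolynomial σ R) := fun m => by
  classical
  rw [coeff_one]
  split_ifs <;> simp

theorem coeffsNormLE_X [NormOneClass R] (i : σ) :
    CoeffsNormLE 1 (X i : MvPolynomial σ R) := fun m => by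
  classical
  rw [coeff_X]
  split_ifs <;> simp

variable [IsUltrametricDist R]

theorem CoeffsNormLE.sum {ι : Type*} {s : Finset ι} {f : ι → MvPolynomial σ R}
    (hε : 0 ≤ ε) (hf : ∀ i ∈ s, CoeffsNormLE ε (f i)) :
    CoeffsNormLE ε (∑ i ∈ s, f i) := fun m => by
  rw [coeff_sum]
  exact IsUltrametricDist.norm_sum_le_of_forall_le_of_nonneg hε fun i hi => hf i hi m

theorem CoeffsNormLE.mul (hf : CoeffsNormLE ε f) (hg : CoeffsNormLE δ g) :
    CoeffsNormLE (ε * δ) (f * g) := fun m => by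
  classical
  rw [coeff_mul]
  refine IsUltrametricDist.norm_sum_le_of_forall_le_of_nonneg
    (mul_nonneg hf.nonneg hg.nonneg) fun x _ => ?_
  exact (norm_mul_le _ _).trans (mul_le_mul (hf _) (hg _) (norm_nonneg _) hf.nonneg)

theorem CoeffsNormLE.pow [NormOneClass R] (hf : CoeffsNormLE 1 f) (n : ℕ) :
    CoeffsNormLE 1 (f ^ n) := by
  induction n with
  | zero => simpa using coeffsNormLE_one
  | succ n ih => simpa [pow_succ] using ih.mul hf

theorem coeffsNormLE_X_mul_X [NormOneClass R] (i j : σ) :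
    CoeffsNormLE 1 (X i * X j : MvPolynomial σ R) := by
  simpa using (coeffsNormLE_X i).mul (coeffsNormLE_X j)

end CoeffsNormLE

section TruncExp

variable {K : Type*} [Field K]

noncomputable def truncExp (a : K) (n : ℕ) (t : MvPolynomial σ K) : MvPolynomial σ K :=
  ∑ k ∈ range (n + 1), C (a ^ k / (k.factorial : K)) * t ^ k

theorem truncExp_succ (a : K) (n : ℕ) (t : MvPolynomial σ K) :
    truncExp a (n + 1) t = truncExp a n t + C (a ^ (n + 1) / (n + 1).factorial) * t ^ (n + 1) :=
  sum_range_succ _ _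

theorem truncExp_mul_truncExp (a : K) (n : ℕ) (t u : MvPolynomial σ K) :
    truncExp a n t * truncExp a n u =
      ∑ x ∈ range (n + 1) ×ˢ range (n + 1),
        C (a ^ x.1 / x.1.factorial * (a ^ x.2 / x.2.factorial)) * (t ^ x.1 * u ^ x.2) := by
  rw [truncExp, truncExp, sum_mul_sum, sum_product]
  refine sum_congr rfl fun i _ => sum_congr rfl fun j _ => ?_
  rw [map_mul]
  ring

variable [CharZero K]

theorem derivation_truncExp_sub (D : Derivation K (MvPolynomial σ K) (MvPolynomial σ K))
    (a : K) (n : ℕ) (t : MvPolynomial σ K) :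
    D (truncExp a n t) - C a * D t * truncExp a n t =
      -(C (a * (a ^ n / n.factorial)) * (D t * t ^ n)) := by
  induction n with
  | zero => simp [truncExp]
  | succ n ih =>
    have hc := congrArg (C : K → MvPolynomial σ K) (mul_pow_div_factorial a n)
    simp only [map_mul, map_natCast] at hc ih ⊢
    rw [truncExp_succ, map_add, Derivation.leibniz, Derivation.leibniz_pow, derivation_C,
      Nat.add_sub_cancel]
    simp only [smul_eq_mul, nsmul_eq_mul]
    linear_combination ih - D t * t ^ n * hc

theorem truncExp_add (a : K) (n : ℕ) (t u : MvPolynomial σ K) :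
    truncExp a n (t + u) =
      ∑ x ∈ range (n + 1) ×ˢ range (n + 1) with x.1 + x.2 ≤ n,
        C (a ^ x.1 / x.1.factorial * (a ^ x.2 / x.2.factorial)) * (t ^ x.1 * u ^ x.2) := by
  rw [← Finset.Nat.sum_range_sum_antidiagonal, truncExp]
  refine sum_congr rfl fun k _ => ?_
  rw [(Commute.all t u).add_pow', mul_sum]
  refine sum_congr rfl fun x hx => ?_
  rw [HasAntidiagonal.mem_antidiagonal] at hx
  subst hx
  rw [pow_div_factorial_mul_pow_div_factorial, map_mul, map_natCast, nsmul_eq_mul]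
  ring

theorem truncExp_add_sub_mul (a : K) (n : ℕ) (t u : MvPolynomial σ K) :
    truncExp a n (t + u) - truncExp a n t * truncExp a n u =
      -∑ x ∈ range (n + 1) ×ˢ range (n + 1) with n < x.1 + x.2,
        C (a ^ x.1 / x.1.factorial * (a ^ x.2 / x.2.factorial)) * (t ^ x.1 * u ^ x.2) := by
  rw [truncExp_add, truncExp_mul_truncExp,
    ← sum_filter_add_sum_filter_not (range (n + 1) ×ˢ range (n + 1)) (fun x => x.1 + x.2 ≤ n)]
  simp only [not_le]
  ring

end TruncExp

section Padic

variable {p : ℕ} [Fact p.Prime]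

theorem coeffsNormLE_derivation_truncExp_sub (hodd : p ≠ 2) (s : ℕ)
    (D : Derivation ℚ_[p] (MvPolynomial σ ℚ_[p]) (MvPolynomial σ ℚ_[p]))
    {t : MvPolynomial σ ℚ_[p]} (ht : CoeffsNormLE 1 t) (hDt : CoeffsNormLE 1 (D t)) :
    CoeffsNormLE ((p : ℝ) ^ (-(s : ℤ)))
      (D (truncExp (p : ℚ_[p]) (truncDeg p s) t) -
        C (p : ℚ_[p]) * D t * truncExp (p : ℚ_[p]) (truncDeg p s) t) := by
  rw [derivation_truncExp_sub]
  refine (CoeffsNormLE.C_mul ?_ (by simpa using hDt.mul (ht.pow _))).neg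
  rw [mul_pow_div_factorial]
  exact (IsUltrametricDist.norm_natCast_mul_le _ _).trans
    (norm_pow_div_factorial_le hodd (Nat.lt_succ_self _))

theorem coeffsNormLE_truncExp_add_sub_mul (hodd : p ≠ 2) (s : ℕ) {t u : MvPolynomial σ ℚ_[p]}
    (ht : CoeffsNormLE 1 t) (hu : CoeffsNormLE 1 u) :
    CoeffsNormLE ((p : ℝ) ^ (-(s : ℤ)))
      (truncExp (p : ℚ_[p]) (truncDeg p s) (t + u) -
        truncExp (p : ℚ_[p]) (truncDeg p s) t * truncExp (p : ℚ_[p]) (truncDeg p s) u) := by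
  rw [truncExp_add_sub_mul]
  refine (CoeffsNormLE.sum (by positivity) fun x hx => ?_).neg
  refine CoeffsNormLE.C_mul ?_ (by simpa using (ht.pow x.1).mul (hu.pow x.2))
  rw [pow_div_factorial_mul_pow_div_factorial]
  exact (IsUltrametricDist.norm_natCast_mul_le _ _).trans
    (norm_pow_div_factorial_le hodd (mem_filter.1 hx).2)

end Padic

end MvPolynomial

theorem truncExpMuX_eq_truncExp (p : ℕ) [Fact p.Prime] (s : ℕ) :
    truncExpMuX p s = truncExp (p : ℚ_[p]) (truncDeg p s) (X 0 * X 1) := rfl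

theorem truncExpMuU_eq_truncExp (p : ℕ) [Fact p.Prime] (s : ℕ) (i : Fin 3) :
    truncExpMuU p s i = truncExp (p : ℚ_[p]) (truncDeg p s) (X 0 * X i) := rfl

theorem truncExpMuUV_eq_truncExp (p : ℕ) [Fact p.Prime] (s : ℕ) :
    truncExpMuUV p s = truncExp (p : ℚ_[p]) (truncDeg p s) (X 0 * X 1 + X 0 * X 2) := by
  simp only [← mul_add]
  rfl

theorem truncExp_derivative_and_addition_congr_general
    (p : ℕ) [Fact p.Prime] (hodd : p ≠ 2) (s : ℕ) :
    (∀ m : Fin 2 →₀ ℕ,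
      ‖(pderiv 1 (truncExpMuX p s) - C (p : ℚ_[p]) * X 0 * truncExpMuX p s).coeff m‖ ≤
        (p : ℝ) ^ (-(s : ℤ))) ∧
    (∀ m : Fin 2 →₀ ℕ,
      ‖(pderiv 0 (truncExpMuX p s) - C (p : ℚ_[p]) * X 1 * truncExpMuX p s).coeff m‖ ≤
        (p : ℝ) ^ (-(s : ℤ))) ∧
    (∀ m : Fin 3 →₀ ℕ,
      ‖(truncExpMuUV p s - truncExpMuU p s 1 * truncExpMuU p s 2).coeff m‖ ≤
        (p : ℝ) ^ (-(s : ℤ))) := by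
  have hXX := coeffsNormLE_X_mul_X (R := ℚ_[p]) (σ := Fin 2) 0 1
  have hd₁ : pderiv 1 (X 0 * X 1 : MvPolynomial (Fin 2) ℚ_[p]) = X 0 := by simp
  have hd₀ : pderiv 0 (X 0 * X 1 : MvPolynomial (Fin 2) ℚ_[p]) = X 1 := by simp
  refine ⟨?_, ?_, ?_⟩
  · have h := coeffsNormLE_derivation_truncExp_sub hodd s (pderiv 1) hXX
      (by rw [hd₁]; exact coeffsNormLE_X 0)
    rw [hd₁] at h
    exact h
  · have h := coeffsNormLE_derivation_truncExp_sub hodd s (pderiv 0) hXX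
      (by rw [hd₀]; exact coeffsNormLE_X 1)
    rw [hd₀] at h
    exact h
  · rw [truncExpMuUV_eq_truncExp, truncExpMuU_eq_truncExp, truncExpMuU_eq_truncExp]
    exact coeffsNormLE_truncExp_add_sub_mul hodd s (coeffsNormLE_X_mul_X 0 1)
      (coeffsNormLE_X_mul_X 0 2)

/-- **Lemma on the truncated exponential, polynomial form (EV2).** As polynomials over
`ℤ_p` in the variables `μ, x` (resp. `μ, u, v`), modulo `p^s` (all coefficients of the
difference lie in `p^s ℤ_p`):
`(∂/∂x) E_s(pμx) ≡ pμ E_s(pμx)`, `(∂/∂μ) E_s(pμx) ≡ px E_s(pμx)`, and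
`E_s(pμ(u+v)) ≡ E_s(pμu)·E_s(pμv)`. -/
theorem truncExp_derivative_and_addition_congr
    (p : ℕ) [Fact p.Prime] (hodd : p ≠ 2) (s : ℕ) (hs : 0 < s) :
    (∀ m : Fin 2 →₀ ℕ,
      ‖(pderiv 1 (truncExpMuX p s) - C (p : ℚ_[p]) * X 0 * truncExpMuX p s).coeff m‖ ≤
        (p : ℝ) ^ (-(s : ℤ))) ∧
    (∀ m : Fin 2 →₀ ℕ,
      ‖(pderiv 0 (truncExpMuX p s) - C (p : ℚ_[p]) * X 1 * truncExpMuX p s).coeff m‖ ≤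
        (p : ℝ) ^ (-(s : ℤ))) ∧
    (∀ m : Fin 3 →₀ ℕ,
      ‖(truncExpMuUV p s - truncExpMuU p s 1 * truncExpMuU p s 2).coeff m‖ ≤
        (p : ℝ) ^ (-(s : ℤ))) :=
  truncExp_derivative_and_addition_congr_general p hodd s
end

section
/- (Matsuo–Cherednik, symmetrization) Let n ≥ 2, κ ∈ ℂ, λ_1,…,λ_n ∈ ℂ, and let U ⊆ ℂ^n be an open set on which z_i ≠ z_j for all i ≠ j. Suppose holomorphic functions I_σ : U → ℂ, indexed by σ ∈ S_n, satisfy the KZ equations in components: ∂_i I_σ = κ Σ_{j ≠ i} I_{σ∘(i j)} / (z_i − z_j) + λ_{σ(i)} I_σ for all i = 1,…,n and all σ ∈ S_n, where (i j) is the transposition of i and j. Then φ = Σ_{σ ∈ S_n} I_σ satisfies the Calogero–Moser eigenvalue equation −Δφ + κ(κ−1) Σ_{i ≠ j} φ/(z_i − z_j)^2 = E φ on U, where Δ = ∂_1^2 + ⋯ + ∂_n^2 and E = −(λ_1^2 + ⋯ + λ_n^2). -/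
open Finset

/-- Partial derivative `∂_i` of a function of `n` complex variables. -/
noncomputable def partialDeriv {n : ℕ} (i : Fin n) (f : (Fin n → ℂ) → ℂ) :
    (Fin n → ℂ) → ℂ :=
  fun z => fderiv ℂ f z (Pi.single i 1)

/-!
Summing the KZ equations over `σ` and reindexing the transposition terms by `σ ↦ σ * (i j)`
gives the first-order equation `∂ᵢφ = κ rᵢ φ + ψᵢ`, where `rᵢ = Σ_{j≠i} (zᵢ - zⱼ)⁻¹` and
`ψᵢ = Σ_σ λ_{σ(i)} I_σ`; the same reindexing applied to `∂ᵢψᵢ` gives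
`∂ᵢψᵢ = κ Σ_{j≠i} ψⱼ / (zᵢ - zⱼ) + Σ_σ λ_{σ(i)}² I_σ`. Hence
`∂ᵢ²φ = κ² rᵢ² φ - κ Σ_{j≠i} φ / (zᵢ - zⱼ)² + κ Σ_{j≠i} (ψᵢ + ψⱼ) / (zᵢ - zⱼ) + Σ_σ λ_{σ(i)}² I_σ`.
Summing over `i`, the antisymmetric `ψ` terms cancel, the last term gives `(Σ λᵢ²) φ`, and
`Σᵢ rᵢ² = Σ_{i≠j} (zᵢ - zⱼ)⁻²` because the cross terms cancel in cyclic triples.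
-/

section Algebra

variable {ι K : Type*} [DecidableEq ι] [Field K]

theorem inv_sub_mul_inv_sub_add_cyclic (a : ι → K) (ha : Function.Injective a) (i j k : ι) :
    (a i - a j)⁻¹ * (a i - a k)⁻¹ + (a j - a k)⁻¹ * (a j - a i)⁻¹ + (a k - a i)⁻¹ * (a k - a j)⁻¹
      = (if j = k then ((a i - a j) ^ 2)⁻¹ else 0) + (if k = i then ((a j - a k) ^ 2)⁻¹ else 0)
        + (if i = j then ((a k - a i) ^ 2)⁻¹ else 0) := by
  by_cases hij : i = j <;> by_cases hjk : j = k <;> by_cases hki : k = i <;> subst_vars <;>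
    simp_all [sq]
  have hne : ∀ {p q}, p ≠ q → a p - a q ≠ 0 := fun h => sub_ne_zero.2 (ha.ne h)
  have := hne hij; have := hne hjk; have := hne hki
  have := hne (Ne.symm hij); have := hne (Ne.symm hjk); have := hne (Ne.symm hki)
  field_simp
  ring

variable [Fintype ι]

theorem sum_sum_erase_eq_zero_of_antisymm {M : Type*} [AddCommGroup M] (g : ι → ι → M)
    (hg : ∀ i j, i ≠ j → g j i = -g i j) :
    ∑ i, ∑ j ∈ univ.erase i, g i j = 0 := by
  rw [Finset.sum_sigma']
  refine Finset.sum_involution (fun p _ => ⟨p.2, p.1⟩) (fun p hp => ?_) (fun p hp _ => ?_)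
    (fun p hp => ?_) (fun p _ => rfl)
  all_goals
    obtain ⟨i, j⟩ := p
    simp only [Finset.mem_sigma, Finset.mem_univ, Finset.mem_erase, true_and] at hp ⊢
  · rw [hg j i hp.1, neg_add_cancel]
  · exact fun h => hp.1 (congrArg Sigma.fst h)
  · exact ⟨hp.1.symm, trivial⟩

theorem sum_perm_apply_mul_mul_swap (u : ι → K) (f : Equiv.Perm ι → K) (i j : ι) :
    ∑ σ : Equiv.Perm ι, u (σ i) * f (σ * Equiv.swap i j) = ∑ σ : Equiv.Perm ι, u (σ j) * f σ := by
  rw [← Equiv.sum_comp (Equiv.mulRight (Equiv.swap i j)) (fun σ => u (σ j) * f σ)]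
  simp [Equiv.Perm.mul_apply]

def sumInvSub (a : ι → K) (i : ι) : K :=
  ∑ j ∈ univ.erase i, (a i - a j)⁻¹

theorem sum_sumInvSub_sq [CharZero K] (a : ι → K) (ha : Function.Injective a) :
    ∑ i, sumInvSub a i ^ 2 = ∑ i, ∑ j ∈ univ.erase i, ((a i - a j) ^ 2)⁻¹ := by
  have hcycle : ∀ h : ι → ι → ι → K, ∑ i, ∑ j, ∑ k, h j k i = ∑ i, ∑ j, ∑ k, h i j k :=
    fun h => by rw [Finset.sum_comm]; exact Finset.sum_congr rfl fun _ _ => Finset.sum_comm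
  -- Since `(a i - a i)⁻¹ = 0`, all sums may run over the full index set; the cyclic identity
  -- summed over all triples then reads `3 Σᵢ rᵢ² = 3 Σᵢ Σⱼ (aᵢ - aⱼ)⁻²`.
  have hsum := Finset.sum_congr rfl fun i (_ : i ∈ univ) =>
    Finset.sum_congr rfl fun j (_ : j ∈ univ) =>
      Finset.sum_congr rfl fun k (_ : k ∈ univ) => inv_sub_mul_inv_sub_add_cyclic a ha i j k
  simp only [Finset.sum_add_distrib, Finset.sum_ite_eq, Finset.sum_ite_eq', Finset.mem_univ,
    if_true, Finset.sum_ite_irrel, Finset.sum_const_zero] at hsum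
  have c1 : ∑ i, ∑ j, ∑ k, (a j - a k)⁻¹ * (a j - a i)⁻¹
      = ∑ i, ∑ j, ∑ k, (a i - a j)⁻¹ * (a i - a k)⁻¹ := hcycle _
  have c2 : ∑ i, ∑ j, ∑ k, (a i - a j)⁻¹ * (a i - a k)⁻¹
      = ∑ i, ∑ j, ∑ k, (a k - a i)⁻¹ * (a k - a j)⁻¹ := hcycle _
  have c3 : ∑ i, ∑ j, ((a j - a i) ^ 2)⁻¹ = ∑ i, ∑ j, ((a i - a j) ^ 2)⁻¹ := Finset.sum_comm
  have hr : ∀ i, sumInvSub a i = ∑ j, (a i - a j)⁻¹ := fun i =>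
    Finset.sum_erase univ (by rw [sub_self, inv_zero])
  have hs : ∀ i, ∑ j ∈ univ.erase i, ((a i - a j) ^ 2)⁻¹ = ∑ j, ((a i - a j) ^ 2)⁻¹ := fun i =>
    Finset.sum_erase univ (by rw [sub_self, zero_pow two_ne_zero, inv_zero])
  simp only [hr, hs]
  simp only [sq, Finset.sum_mul_sum] at hsum c3 ⊢
  linear_combination (hsum - c1 + c2 + 2 * c3) / 3

end Algebra

section PartialDeriv

variable {n : ℕ} {f g : (Fin n → ℂ) → ℂ} {z : Fin n → ℂ} (i : Fin n)

theorem HasFDerivAt.partialDeriv_eq {f' : (Fin n → ℂ) →L[ℂ] ℂ} (h : HasFDerivAt f f' z) :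
    partialDeriv i f z = f' (Pi.single i 1) := by
  rw [partialDeriv, h.fderiv]

theorem partialDeriv_congr_of_eventuallyEq (h : f =ᶠ[nhds z] g) :
    partialDeriv i f z = partialDeriv i g z := by
  rw [partialDeriv, partialDeriv, h.fderiv_eq]

theorem partialDeriv_fun_add (hf : DifferentiableAt ℂ f z) (hg : DifferentiableAt ℂ g z) :
    partialDeriv i (fun w => f w + g w) z = partialDeriv i f z + partialDeriv i g z :=
  (hf.hasFDerivAt.add hg.hasFDerivAt).partialDeriv_eq i

theorem partialDeriv_fun_mul (hf : DifferentiableAt ℂ f z) (hg : DifferentiableAt ℂ g z) :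
    partialDeriv i (fun w => f w * g w) z =
      partialDeriv i f z * g z + f z * partialDeriv i g z := by
  rw [(hf.hasFDerivAt.fun_mul hg.hasFDerivAt).partialDeriv_eq i]
  simp [partialDeriv, add_comm, mul_comm]

theorem partialDeriv_const_mul (c : ℂ) (hf : DifferentiableAt ℂ f z) :
    partialDeriv i (fun w => c * f w) z = c * partialDeriv i f z := by
  rw [(hf.hasFDerivAt.const_mul c).partialDeriv_eq i]
  simp [partialDeriv]

theorem partialDeriv_fun_sum {α : Type*} {s : Finset α} {F : α → (Fin n → ℂ) → ℂ}
    (hF : ∀ a ∈ s, DifferentiableAt ℂ (F a) z) :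
    partialDeriv i (fun w => ∑ a ∈ s, F a w) z = ∑ a ∈ s, partialDeriv i (F a) z := by
  rw [(HasFDerivAt.fun_sum fun a ha => (hF a ha).hasFDerivAt).partialDeriv_eq i]
  simp [partialDeriv]

theorem hasFDerivAt_inv_sub {i j : Fin n} (hz : z i ≠ z j) :
    HasFDerivAt (fun w : Fin n → ℂ => (w i - w j)⁻¹)
      ((-((z i - z j) ^ 2)⁻¹) • (ContinuousLinearMap.proj (R := ℂ) (φ := fun _ : Fin n => ℂ) i -
        ContinuousLinearMap.proj j)) z :=
  (hasDerivAt_inv (sub_ne_zero.2 hz)).comp_hasFDerivAt z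
    ((hasFDerivAt_apply i z).sub (hasFDerivAt_apply j z))

theorem partialDeriv_inv_sub {j : Fin n} (hji : j ≠ i) (hz : z i ≠ z j) :
    partialDeriv i (fun w => (w i - w j)⁻¹) z = -((z i - z j) ^ 2)⁻¹ := by
  rw [(hasFDerivAt_inv_sub hz).partialDeriv_eq i]
  simp [Pi.single_eq_of_ne hji]

variable {i} in
theorem differentiableAt_sumInvSub (hz : ∀ j, j ≠ i → z i ≠ z j) :
    DifferentiableAt ℂ (fun w => sumInvSub w i) z :=
  DifferentiableAt.fun_sum fun j hj =>
    (hasFDerivAt_inv_sub (hz j (Finset.ne_of_mem_erase hj))).differentiableAt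

theorem partialDeriv_sumInvSub (hz : ∀ j, j ≠ i → z i ≠ z j) :
    partialDeriv i (fun w => sumInvSub w i) z = -∑ j ∈ univ.erase i, ((z i - z j) ^ 2)⁻¹ := by
  unfold sumInvSub
  rw [partialDeriv_fun_sum i fun j hj =>
    (hasFDerivAt_inv_sub (hz j (Finset.ne_of_mem_erase hj))).differentiableAt,
    ← Finset.sum_neg_distrib]
  exact Finset.sum_congr rfl fun j hj =>
    partialDeriv_inv_sub i (Finset.ne_of_mem_erase hj) (hz j (Finset.ne_of_mem_erase hj))

end PartialDeriv

section KZ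

variable {n : ℕ} {κ : ℂ} {lam : Fin n → ℂ} {I : Equiv.Perm (Fin n) → (Fin n → ℂ) → ℂ}
  {z : Fin n → ℂ}

theorem partialDeriv_sum_of_kz (hI : ∀ σ, DifferentiableAt ℂ (I σ) z)
    (hKZ : ∀ σ i, partialDeriv i (I σ) z =
      κ * ∑ j ∈ univ.erase i, I (σ * Equiv.swap i j) z / (z i - z j) + lam (σ i) * I σ z)
    (i : Fin n) :
    partialDeriv i (fun w => ∑ σ, I σ w) z =
      κ * sumInvSub z i * ∑ σ, I σ z + ∑ σ, lam (σ i) * I σ z := by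
  have hswap : ∀ j, ∑ σ, I (σ * Equiv.swap i j) z = ∑ σ, I σ z := fun j =>
    Equiv.sum_comp (Equiv.mulRight (Equiv.swap i j)) (fun σ => I σ z)
  rw [partialDeriv_fun_sum i fun σ _ => hI σ, Finset.sum_congr rfl fun σ _ => hKZ σ i,
    Finset.sum_add_distrib, ← Finset.mul_sum, Finset.sum_comm, mul_assoc, sumInvSub,
    Finset.sum_mul]
  congr 2
  refine Finset.sum_congr rfl fun j _ => ?_
  rw [← Finset.sum_div, hswap, div_eq_mul_inv, mul_comm]

theorem partialDeriv_weighted_sum_of_kz (hI : ∀ σ, DifferentiableAt ℂ (I σ) z)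
    (hKZ : ∀ σ i, partialDeriv i (I σ) z =
      κ * ∑ j ∈ univ.erase i, I (σ * Equiv.swap i j) z / (z i - z j) + lam (σ i) * I σ z)
    (i : Fin n) :
    partialDeriv i (fun w => ∑ σ, lam (σ i) * I σ w) z =
      κ * ∑ j ∈ univ.erase i, (∑ σ, lam (σ j) * I σ z) / (z i - z j) +
        ∑ σ, lam (σ i) ^ 2 * I σ z := by
  rw [partialDeriv_fun_sum i fun σ _ => (hI σ).const_mul _,
    Finset.sum_congr rfl fun σ _ => partialDeriv_const_mul i _ (hI σ)]
  simp only [hKZ, ← sum_perm_apply_mul_mul_swap lam (fun σ => I σ z) i, mul_add,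
    Finset.sum_add_distrib, Finset.mul_sum, Finset.sum_div]
  rw [Finset.sum_comm]
  congr 1
  · exact Finset.sum_congr rfl fun _ _ => Finset.sum_congr rfl fun _ _ => by ring
  · exact Finset.sum_congr rfl fun _ _ => by ring

theorem partialDeriv_partialDeriv_sum_of_kz {U : Set (Fin n → ℂ)} (hU : IsOpen U) (hz : z ∈ U)
    {i : Fin n} (hsep : ∀ j, j ≠ i → z i ≠ z j)
    (hI : ∀ σ, ∀ w ∈ U, DifferentiableAt ℂ (I σ) w)
    (hKZ : ∀ σ i, ∀ w ∈ U, partialDeriv i (I σ) w =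
      κ * ∑ j ∈ univ.erase i, I (σ * Equiv.swap i j) w / (w i - w j) + lam (σ i) * I σ w) :
    partialDeriv i (partialDeriv i fun w => ∑ σ, I σ w) z =
      κ ^ 2 * sumInvSub z i ^ 2 * ∑ σ, I σ z -
        κ * (∑ j ∈ univ.erase i, ((z i - z j) ^ 2)⁻¹) * ∑ σ, I σ z +
        κ * ∑ j ∈ univ.erase i, (∑ σ, lam (σ i) * I σ z + ∑ σ, lam (σ j) * I σ z) / (z i - z j) +
        ∑ σ, lam (σ i) ^ 2 * I σ z := by
  have hIz : ∀ σ, DifferentiableAt ℂ (I σ) z := fun σ => hI σ z hz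
  have hKZz := fun σ i => hKZ σ i z hz
  have hfirst : partialDeriv i (fun w => ∑ σ, I σ w) =ᶠ[nhds z]
      fun w => κ * sumInvSub w i * ∑ σ, I σ w + ∑ σ, lam (σ i) * I σ w :=
    Filter.eventually_of_mem (hU.mem_nhds hz) fun w hw =>
      partialDeriv_sum_of_kz (fun σ => hI σ w hw) (fun σ i => hKZ σ i w hw) i
  have hφ : DifferentiableAt ℂ (fun w => ∑ σ, I σ w) z :=
    DifferentiableAt.fun_sum fun σ _ => hIz σ
  have hr := differentiableAt_sumInvSub hsep
  rw [partialDeriv_congr_of_eventuallyEq i hfirst,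
    partialDeriv_fun_add i ((hr.const_mul κ).fun_mul hφ)
      (DifferentiableAt.fun_sum fun σ _ => (hIz σ).const_mul _),
    partialDeriv_fun_mul i (hr.const_mul κ) hφ, partialDeriv_const_mul i κ hr,
    partialDeriv_sumInvSub i hsep, partialDeriv_sum_of_kz hIz hKZz,
    partialDeriv_weighted_sum_of_kz hIz hKZz]
  have hsplit : ∑ j ∈ univ.erase i,
      (∑ σ, lam (σ i) * I σ z + ∑ σ, lam (σ j) * I σ z) / (z i - z j) =
        sumInvSub z i * ∑ σ, lam (σ i) * I σ z +
          ∑ j ∈ univ.erase i, (∑ σ, lam (σ j) * I σ z) / (z i - z j) := by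
    rw [sumInvSub, Finset.sum_mul, ← Finset.sum_add_distrib]
    exact Finset.sum_congr rfl fun j _ => by ring
  rw [hsplit]
  ring

end KZ

theorem matsuo_cherednik_symmetrization_general
    (n : ℕ) (κ : ℂ) (lam : Fin n → ℂ)
    (U : Set (Fin n → ℂ)) (hU : IsOpen U)
    (hsep : ∀ z ∈ U, ∀ i j : Fin n, i ≠ j → z i ≠ z j)
    (I : Equiv.Perm (Fin n) → (Fin n → ℂ) → ℂ)
    (hhol : ∀ σ, DifferentiableOn ℂ (I σ) U)
    (hKZ : ∀ σ : Equiv.Perm (Fin n), ∀ i : Fin n, ∀ z ∈ U,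
      partialDeriv i (I σ) z =
        κ * ∑ j ∈ univ.erase i, I (σ * Equiv.swap i j) z / (z i - z j) +
          lam (σ i) * I σ z) :
    ∀ z ∈ U,
      -(∑ i : Fin n, partialDeriv i (partialDeriv i (fun w => ∑ σ : Equiv.Perm (Fin n), I σ w)) z) +
        κ * (κ - 1) * ∑ i : Fin n, ∑ j ∈ univ.erase i,
          (∑ σ : Equiv.Perm (Fin n), I σ z) / (z i - z j) ^ 2 =
      (-(∑ i : Fin n, lam i ^ 2)) * ∑ σ : Equiv.Perm (Fin n), I σ z := by
  intro z hz
  have hinj : Function.Injective z := fun i j hij => by_contra fun hne => hsep z hz i j hne hij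
  have hI : ∀ σ, ∀ w ∈ U, DifferentiableAt ℂ (I σ) w := fun σ w hw =>
    (hhol σ).differentiableAt (hU.mem_nhds hw)
  rw [Finset.sum_congr rfl fun i _ => partialDeriv_partialDeriv_sum_of_kz hU hz
    (fun j hji => hsep z hz i j hji.symm) hI hKZ]
  have hcross : ∑ i, ∑ j ∈ univ.erase i,
      (∑ σ, lam (σ i) * I σ z + ∑ σ, lam (σ j) * I σ z) / (z i - z j) = 0 :=
    sum_sum_erase_eq_zero_of_antisymm _ fun i j _ => by rw [← neg_sub, div_neg, add_comm]
  have hsq : ∑ i, ∑ σ, lam (σ i) ^ 2 * I σ z = (∑ i, lam i ^ 2) * ∑ σ, I σ z := by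
    rw [Finset.sum_comm, Finset.mul_sum]
    exact Finset.sum_congr rfl fun σ _ => by
      rw [← Finset.sum_mul, Equiv.sum_comp σ (fun k => lam k ^ 2)]
  have hpot : ∑ i, ∑ j ∈ univ.erase i, (∑ σ, I σ z) / (z i - z j) ^ 2 =
      (∑ i, ∑ j ∈ univ.erase i, ((z i - z j) ^ 2)⁻¹) * ∑ σ, I σ z := by
    simp only [div_eq_mul_inv, Finset.sum_mul, mul_comm]
  simp only [Finset.sum_add_distrib, Finset.sum_sub_distrib, ← Finset.sum_mul, ← Finset.mul_sum,
    hcross, hsq, hpot, sum_sumInvSub_sq z hinj]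
  ring

/-- **Matsuo–Cherednik correspondence, symmetrization.** If holomorphic functions
`I σ`, `σ ∈ S_n`, solve the KZ equations in components on an open set `U` where the
coordinates are pairwise distinct, then `φ = Σ_σ I σ` satisfies the Calogero–Moser
eigenvalue equation with coupling `κ(κ−1)` and eigenvalue `E = −(λ₁² + ⋯ + λ_n²)`. -/
theorem matsuo_cherednik_symmetrization
    (n : ℕ) (hn : 2 ≤ n) (κ : ℂ) (lam : Fin n → ℂ)
    (U : Set (Fin n → ℂ)) (hU : IsOpen U)
    (hsep : ∀ z ∈ U, ∀ i j : Fin n, i ≠ j → z i ≠ z j)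
    (I : Equiv.Perm (Fin n) → (Fin n → ℂ) → ℂ)
    (hhol : ∀ σ, DifferentiableOn ℂ (I σ) U)
    (hKZ : ∀ σ : Equiv.Perm (Fin n), ∀ i : Fin n, ∀ z ∈ U,
      partialDeriv i (I σ) z =
        κ * ∑ j ∈ univ.erase i, I (σ * Equiv.swap i j) z / (z i - z j) +
          lam (σ i) * I σ z) :
    ∀ z ∈ U,
      -(∑ i : Fin n, partialDeriv i (partialDeriv i (fun w => ∑ σ : Equiv.Perm (Fin n), I σ w)) z) +
        κ * (κ - 1) * ∑ i : Fin n, ∑ j ∈ univ.erase i,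
          (∑ σ : Equiv.Perm (Fin n), I σ z) / (z i - z j) ^ 2 =
      (-(∑ i : Fin n, lam i ^ 2)) * ∑ σ : Equiv.Perm (Fin n), I σ z :=
  matsuo_cherednik_symmetrization_general n κ lam U hU hsep I hhol hKZ
end

section
/- (Vanishing for d > 1, n = 2) Let r, q be coprime positive integers with 1/2 < r/q < 1, m an integer, κ = r/q + m, p = kq+1 an odd prime, and s a positive integer with p^s + (1−p^s)r/q + m > 0 and (p^s−1)r/q − m > 0. If d > 1 is an integer and p^s > (s−m)/(1 − r/q), then φ_{s,d}(z,λ,κ) and ψ_{s,d}(z,λ,κ) are the zero polynomials. -/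
open Finset Polynomial

noncomputable section

/-- Variables: in `MvPolynomial (Fin 4) ℚ_p` we set `z₁ = X 0`, `z₂ = X 1`,
`λ₁ = X 2`, `λ₂ = X 3`; the variable `t` is the `Polynomial.X` of the outer ring.
The argument `pλ₁(z₁+z₂) + p(λ₂−λ₁)t` of the truncated exponential. -/
def masterArg (p : ℕ) [Fact p.Prime] : Polynomial (MvPolynomial (Fin 4) ℚ_[p]) :=
  Polynomial.C (MvPolynomial.C (p : ℚ_[p]) * MvPolynomial.X 2 *
      (MvPolynomial.X 0 + MvPolynomial.X 1)) +
    Polynomial.C (MvPolynomial.C (p : ℚ_[p]) * (MvPolynomial.X 3 - MvPolynomial.X 2)) *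
      Polynomial.X

/-- `ℰ_s(t,z,λ) = E_s(pλ₁(z₁+z₂) + p(λ₂−λ₁)t)`. -/
def truncExpPoly (p : ℕ) [Fact p.Prime] (s : ℕ) : Polynomial (MvPolynomial (Fin 4) ℚ_[p]) :=
  ∑ k ∈ Finset.range (truncDeg p s + 1),
    Polynomial.C (MvPolynomial.C ((k.factorial : ℚ_[p])⁻¹)) * masterArg p ^ k

/-- The exponent `p^s + (1−p^s)r/q + m' = ((q−r)p^s + r)/q + m'` of `(z₁−z₂)`. -/
def zExp (p q r s : ℕ) (m' : ℤ) : ℤ := (((q : ℤ) - r) * (p : ℤ) ^ s + r) / q + m'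

/-- The exponent `(p^s−1)r/q − m'` of `(t−z₁)(t−z₂)`. -/
def tExp (p q r s : ℕ) (m' : ℤ) : ℤ := ((r : ℤ) * ((p : ℤ) ^ s - 1)) / q - m'

/-- The master polynomial
`Φ_s(t,z,λ,κ') = ℰ_s · (z₁−z₂)^{p^s+(1−p^s)r/q+m'} · ((t−z₁)(t−z₂))^{(p^s−1)r/q−m'}`
for `κ' = r/q + m'`, as a polynomial in `t` over `ℚ_p[z₁,z₂,λ₁,λ₂]`. -/
def masterPoly (p : ℕ) [Fact p.Prime] (q r s : ℕ) (m' : ℤ) :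
    Polynomial (MvPolynomial (Fin 4) ℚ_[p]) :=
  truncExpPoly p s *
    Polynomial.C ((MvPolynomial.X 0 - MvPolynomial.X 1) ^ (zExp p q r s m').toNat) *
    ((Polynomial.X - Polynomial.C (MvPolynomial.X 0)) *
        (Polynomial.X - Polynomial.C (MvPolynomial.X 1))) ^ (tExp p q r s m').toNat

/-- `Φ_{s,1} = Φ_s/(t−z₁)`. -/
def masterPoly1 (p : ℕ) [Fact p.Prime] (q r s : ℕ) (m' : ℤ) :
    Polynomial (MvPolynomial (Fin 4) ℚ_[p]) :=
  truncExpPoly p s *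
    Polynomial.C ((MvPolynomial.X 0 - MvPolynomial.X 1) ^ (zExp p q r s m').toNat) *
    (Polynomial.X - Polynomial.C (MvPolynomial.X 0)) ^ ((tExp p q r s m').toNat - 1) *
    (Polynomial.X - Polynomial.C (MvPolynomial.X 1)) ^ (tExp p q r s m').toNat

/-- `Φ_{s,2} = Φ_s/(t−z₂)`. -/
def masterPoly2 (p : ℕ) [Fact p.Prime] (q r s : ℕ) (m' : ℤ) :
    Polynomial (MvPolynomial (Fin 4) ℚ_[p]) :=
  truncExpPoly p s *
    Polynomial.C ((MvPolynomial.X 0 - MvPolynomial.X 1) ^ (zExp p q r s m').toNat) *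
    (Polynomial.X - Polynomial.C (MvPolynomial.X 0)) ^ (tExp p q r s m').toNat *
    (Polynomial.X - Polynomial.C (MvPolynomial.X 1)) ^ ((tExp p q r s m').toNat - 1)

/-- `I_{s,i,d}`: the coefficient of `t^{d·p^s−1}` in `Φ_{s,i}`. -/
def Icoef (p : ℕ) [Fact p.Prime] (q r s : ℕ) (m' : ℤ) (i d : ℕ) :
    MvPolynomial (Fin 4) ℚ_[p] :=
  (if i = 1 then masterPoly1 p q r s m' else masterPoly2 p q r s m').coeff (d * p ^ s - 1)

/-- `φ_{s,d} = I_{s,1,d} + I_{s,2,d}`. -/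
def phiPoly (p : ℕ) [Fact p.Prime] (q r s : ℕ) (m' : ℤ) (d : ℕ) :
    MvPolynomial (Fin 4) ℚ_[p] :=
  Icoef p q r s m' 1 d + Icoef p q r s m' 2 d

/-- `ψ_{s,d} = I_{s,1,d} − I_{s,2,d}`. -/
def psiPoly (p : ℕ) [Fact p.Prime] (q r s : ℕ) (m' : ℤ) (d : ℕ) :
    MvPolynomial (Fin 4) ℚ_[p] :=
  Icoef p q r s m' 1 d - Icoef p q r s m' 2 d

/-- Congruence of polynomials modulo `p^s`: all coefficients of the difference lie in
`p^s ℤ_p`. -/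
def CongMod (p : ℕ) [Fact p.Prime] (s : ℕ) (P Q : MvPolynomial (Fin 4) ℚ_[p]) : Prop :=
  ∀ m : Fin 4 →₀ ℕ, ‖(P - Q).coeff m‖ ≤ (p : ℝ) ^ (-(s : ℤ))

end

set_option maxHeartbeats 1000000 in
/-- **Vanishing for `d > 1` (`n = 2`, Lemma 3.1).** Under the standing assumptions
(`κ = r/q + m` with `r, q` coprime, `1/2 < r/q < 1`, `p = kq+1` an odd prime, `s ≥ 1`,
and the positivity conditions making `Φ_s` a polynomial), if `d > 1` and
`p^s > (s−m)/(1−r/q)` (equivalently `(q−r)p^s > q(s−m)`), then `φ_{s,d}` and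
`ψ_{s,d}` are the zero polynomials. -/
theorem phi_psi_vanish_of_d_gt_one
    (p q r k s : ℕ) [Fact p.Prime] (hodd : p ≠ 2)
    (hcop : Nat.Coprime r q) (hhalf : q < 2 * r) (hlt : r < q)
    (hk : 0 < k) (hp : p = k * q + 1) (hs : 0 < s) (m : ℤ)
    (hpos₁ : 0 < zExp p q r s m) (hpos₂ : 0 < tExp p q r s m)
    (d : ℕ) (hd : 1 < d)
    (hbig : ((q : ℤ) - r) * (p : ℤ) ^ s > (q : ℤ) * ((s : ℤ) - m)) :
    phiPoly p q r s m d = 0 ∧ psiPoly p q r s m d = 0 := by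
  have hpp : p.Prime := Fact.out
  have hq3 : 3 ≤ q := by omega
  have hp4 : 4 ≤ p := by
    have : q + 1 ≤ k * q + 1 := by nlinarith
    omega
  have hp5 : 5 ≤ p := by
    by_contra h
    have h4 : p = 4 := by omega
    rw [h4] at hpp
    norm_num at hpp
  set P : ℤ := (p : ℤ) ^ s with hP
  have hPpos : (0 : ℤ) < P := by positivity
  -- q divides p^s - 1
  have hq_dvd : (q : ℤ) ∣ (p : ℤ) - 1 := ⟨k, by rw [hp]; push_cast; ring⟩
  have hdvdP : (q : ℤ) ∣ P - 1 := by
    refine hq_dvd.trans ?_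
    simpa using sub_dvd_pow_sub_pow (p : ℤ) 1 s
  set T : ℕ := (tExp p q r s m).toNat with hT
  have hTcast : (T : ℤ) = tExp p q r s m := Int.toNat_of_nonneg hpos₂.le
  have hT1 : 1 ≤ T := by
    have : (0 : ℤ) < (T : ℤ) := by rw [hTcast]; exact hpos₂
    exact_mod_cast this
  have hqT : (q : ℤ) * T = r * P - r - q * m := by
    rw [hTcast]
    unfold tExp
    rw [mul_sub, Int.mul_ediv_cancel' (hdvdP.mul_left r)]
    ring
  -- truncDeg bound
  have hTD : truncDeg p s ≤ 2 * s := by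
    unfold truncDeg
    have h2 : s * (p - 1) = (p - 2) * s + s := by
      have : p - 1 = (p - 2) + 1 := by omega
      rw [this]; ring
    rw [h2, Nat.mul_add_div (by omega)]
    have hdiv : s / (p - 2) ≤ s / 3 := Nat.div_le_div_left (by omega) (by norm_num)
    omega
  -- key inequality: truncDeg + 2T < 2 p^s ≤ d p^s
  have hkey : truncDeg p s + 2 * T < 2 * p ^ s := by
    have hb2 : (q : ℤ) * P - r * P > q * s - q * m := by nlinarith [hbig]
    have h1 : (q : ℤ) * (truncDeg p s) ≤ 2 * (q * s) := by
      have := hTD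
      have hq0 : (0 : ℤ) ≤ q := by positivity
      nlinarith [show ((truncDeg p s : ℤ)) ≤ 2 * s by exact_mod_cast hTD]
    have hr1 : (1 : ℤ) ≤ r := by
      have : 1 ≤ r := by omega
      exact_mod_cast this
    have hmain : (q : ℤ) * ((truncDeg p s : ℤ) + 2 * T) < (q : ℤ) * (2 * P) := by
      nlinarith [hqT, hb2, h1, hr1]
    have hqpos : (0 : ℤ) < q := by positivity
    have h2 := lt_of_mul_lt_mul_left hmain hqpos.le
    rw [hP] at h2
    exact_mod_cast h2
  have hdp : 2 * p ^ s ≤ d * p ^ s := Nat.mul_le_mul_right _ (by omega)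
  have hps1 : 1 ≤ p ^ s := Nat.one_le_pow _ _ (by omega)
  -- degree bounds
  have hArg : (masterArg p).natDegree ≤ 1 := by
    unfold masterArg
    refine le_trans (Polynomial.natDegree_add_le _ _) ?_
    simp only [Polynomial.natDegree_C, max_le_iff]
    constructor
    · omega
    · exact le_trans (Polynomial.natDegree_C_mul_le _ _) (by simp)
  have hE : (truncExpPoly p s).natDegree ≤ truncDeg p s := by
    unfold truncExpPoly
    apply Polynomial.natDegree_sum_le_of_forall_le
    intro i hi
    refine le_trans (Polynomial.natDegree_C_mul_le _ _) ?_
    refine le_trans Polynomial.natDegree_pow_le ?_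
    have : i ≤ truncDeg p s := by
      simp only [Finset.mem_range] at hi; omega
    have h5 : i * (masterArg p).natDegree ≤ i * 1 := Nat.mul_le_mul_left _ hArg
    omega
  have hdeg1 : (masterPoly1 p q r s m).natDegree < d * p ^ s - 1 := by
    unfold masterPoly1
    rw [← hT]
    have hb : (truncExpPoly p s *
        Polynomial.C ((MvPolynomial.X 0 - MvPolynomial.X 1 : MvPolynomial (Fin 4) ℚ_[p]) ^
          (zExp p q r s m).toNat) *
        (Polynomial.X - Polynomial.C (MvPolynomial.X 0)) ^ (T - 1) *
        (Polynomial.X - Polynomial.C (MvPolynomial.X 1)) ^ T).natDegree ≤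
        truncDeg p s + (T - 1) + T := by
      refine le_trans (Polynomial.natDegree_mul_le) ?_
      have h2 : ((Polynomial.X - Polynomial.C (MvPolynomial.X 1) :
          Polynomial (MvPolynomial (Fin 4) ℚ_[p])) ^ T).natDegree ≤ T := by
        refine le_trans Polynomial.natDegree_pow_le ?_
        rw [Polynomial.natDegree_X_sub_C]; omega
      refine add_le_add ?_ h2
      refine le_trans (Polynomial.natDegree_mul_le) ?_
      have h3 : ((Polynomial.X - Polynomial.C (MvPolynomial.X 0) :
          Polynomial (MvPolynomial (Fin 4) ℚ_[p])) ^ (T - 1)).natDegree ≤ T - 1 := by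
        refine le_trans Polynomial.natDegree_pow_le ?_
        rw [Polynomial.natDegree_X_sub_C]; omega
      refine add_le_add ?_ h3
      refine le_trans (Polynomial.natDegree_mul_le) ?_
      rw [Polynomial.natDegree_C]
      omega
    omega
  have hdeg2 : (masterPoly2 p q r s m).natDegree < d * p ^ s - 1 := by
    unfold masterPoly2
    rw [← hT]
    have hb : (truncExpPoly p s *
        Polynomial.C ((MvPolynomial.X 0 - MvPolynomial.X 1 : MvPolynomial (Fin 4) ℚ_[p]) ^
          (zExp p q r s m).toNat) *
        (Polynomial.X - Polynomial.C (MvPolynomial.X 0)) ^ T *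
        (Polynomial.X - Polynomial.C (MvPolynomial.X 1)) ^ (T - 1)).natDegree ≤
        truncDeg p s + T + (T - 1) := by
      refine le_trans (Polynomial.natDegree_mul_le) ?_
      have h2 : ((Polynomial.X - Polynomial.C (MvPolynomial.X 1) :
          Polynomial (MvPolynomial (Fin 4) ℚ_[p])) ^ (T - 1)).natDegree ≤ T - 1 := by
        refine le_trans Polynomial.natDegree_pow_le ?_
        rw [Polynomial.natDegree_X_sub_C]; omega
      refine add_le_add ?_ h2
      refine le_trans (Polynomial.natDegree_mul_le) ?_
      have h3 : ((Polynomial.X - Polynomial.C (MvPolynomial.X 0) :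
          Polynomial (MvPolynomial (Fin 4) ℚ_[p])) ^ T).natDegree ≤ T := by
        refine le_trans Polynomial.natDegree_pow_le ?_
        rw [Polynomial.natDegree_X_sub_C]; omega
      refine add_le_add ?_ h3
      refine le_trans (Polynomial.natDegree_mul_le) ?_
      rw [Polynomial.natDegree_C]
      omega
    omega
  have hI1 : Icoef p q r s m 1 d = 0 := by
    unfold Icoef
    simp only [if_pos rfl]
    exact Polynomial.coeff_eq_zero_of_natDegree_lt hdeg1
  have hI2 : Icoef p q r s m 2 d = 0 := by
    unfold Icoef
    norm_num
    exact Polynomial.coeff_eq_zero_of_natDegree_lt hdeg2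
  constructor
  · unfold phiPoly; rw [hI1, hI2]; ring
  · unfold psiPoly; rw [hI1, hI2]; ring
end

section
/- (Theorem 3.2(ii)) Let r, q be coprime positive integers with 1/2 < r/q < 1, κ = r/q (i.e. m = 0), p = kq+1 an odd prime, and s a positive integer. Then the polynomial φ_{s,1}(z,λ,κ) is nonzero modulo p^2 (not all of its coefficients lie in p^2 ℤ_p) and the polynomial ψ_{s,1}(z,λ,κ) is nonzero modulo p (not all of its coefficients lie in p ℤ_p). -/
open Finset Polynomial

set_option linter.unusedSectionVars false
set_option maxHeartbeats 1000000

open Finset Polynomial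

section NT
variable {p : ℕ} [hp : Fact p.Prime]

private lemma lucas_unit_step {n k₀ : ℕ} (h1 : ¬ p ∣ Nat.choose (n % p) (k₀ % p))
    (h2 : ¬ p ∣ Nat.choose (n / p) (k₀ / p)) : ¬ p ∣ Nat.choose n k₀ := by
  intro h
  have hmod := Choose.choose_modEq_choose_mod_mul_choose_div_nat (p := p) (n := n) (k := k₀)
  have hd : p ∣ Nat.choose (n % p) (k₀ % p) * Nat.choose (n / p) (k₀ / p) :=
    (Nat.modEq_zero_iff_dvd.mp ((hmod.symm.trans (Nat.modEq_zero_iff_dvd.mpr h))))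
  rcases (Nat.Prime.dvd_mul hp.out).mp hd with h' | h'
  · exact h1 h'
  · exact h2 h'

private lemma not_dvd_choose_of_lt {n k₀ : ℕ} (hn : n < p) (hk : k₀ ≤ n) :
    ¬ p ∣ Nat.choose n k₀ := by
  intro h
  have hd : p ∣ Nat.factorial n := by
    rw [← Nat.choose_mul_factorial_mul_factorial hk]
    exact (h.mul_right _).mul_right _
  exact absurd ((Nat.Prime.dvd_factorial hp.out).mp hd) (Nat.not_le.mpr hn)

/-- geometric sum `1 + p + ... + p^(s-1)` -/
private def Sgeo (p s : ℕ) : ℕ := ∑ j ∈ Finset.range s, p ^ j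

private lemma Sgeo_succ (s : ℕ) : Sgeo p (s + 1) = 1 + p * Sgeo p s := by
  unfold Sgeo
  rw [Finset.sum_range_succ']
  simp [Finset.mul_sum, pow_succ, mul_comm, add_comm]

private lemma Sgeo_geo (s : ℕ) : (p - 1) * Sgeo p s + 1 = p ^ s := by
  induction s with
  | zero => simp [Sgeo]
  | succ s ih =>
    obtain ⟨P, hP⟩ : ∃ P, p = P + 1 := ⟨p - 1, (Nat.succ_pred_eq_of_pos hp.out.pos).symm⟩
    rw [Sgeo_succ, pow_succ, ← ih, hP]
    simp only [Nat.add_sub_cancel]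
    ring

private lemma Sgeo_pos {s : ℕ} (hs : 0 < s) : 1 ≤ Sgeo p s := by
  obtain ⟨t, rfl⟩ := Nat.exists_eq_add_of_lt hs
  rw [Nat.zero_add, Sgeo_succ]; omega

private lemma compl_Sgeo (c s : ℕ) (hc : c ≤ p - 1) :
    p ^ s - 1 - c * Sgeo p s = (p - 1 - c) * Sgeo p s := by
  have h := Sgeo_geo (p := p) s
  have : c * Sgeo p s + (p - 1 - c) * Sgeo p s = (p - 1) * Sgeo p s := by
    rw [← Nat.add_mul]; congr 1; omega
  omega

private lemma not_dvd_choose_geoA (c : ℕ) (hc1 : p ≤ 2 * c + 1) (hc2 : c ≤ p - 1) :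
    ∀ s, ¬ p ∣ Nat.choose (c * Sgeo p s) (p ^ s - 1 - c * Sgeo p s)
  | 0 => by
    simp only [Sgeo, Finset.range_zero, Finset.sum_empty, mul_zero, pow_zero]
    simp [Nat.dvd_one]
    exact hp.out.ne_one
  | (s + 1) => by
    have hp2 := hp.out.two_le
    have hcp : c < p := by omega
    have hn : c * Sgeo p (s + 1) = c + p * (c * Sgeo p s) := by
      rw [Sgeo_succ]; ring
    have hk : p ^ (s + 1) - 1 - c * Sgeo p (s + 1) = (p - 1 - c) + p * ((p - 1 - c) * Sgeo p s) := by
      rw [compl_Sgeo c (s+1) hc2, Sgeo_succ]; ring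
    rw [hn] at hk
    rw [hn, hk]
    apply lucas_unit_step
    · rw [Nat.add_mul_mod_self_left, Nat.add_mul_mod_self_left,
        Nat.mod_eq_of_lt hcp, Nat.mod_eq_of_lt (by omega)]
      exact not_dvd_choose_of_lt hcp (by omega)
    · rw [Nat.add_mul_div_left _ _ hp.out.pos, Nat.add_mul_div_left _ _ hp.out.pos,
        Nat.div_eq_of_lt hcp, Nat.div_eq_of_lt (by omega), Nat.zero_add, Nat.zero_add,
        ← compl_Sgeo c s hc2]
      exact not_dvd_choose_geoA c hc1 hc2 s

private lemma not_dvd_choose_geoB (c s : ℕ) (hs : 0 < s) (hc1 : p + 1 ≤ 2 * c) (hc2 : c ≤ p - 1)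
    (hc0 : 1 ≤ c) :
    ¬ p ∣ Nat.choose (c * Sgeo p s - 1) (p ^ s - c * Sgeo p s) := by
  obtain ⟨t, rfl⟩ := Nat.exists_eq_add_of_lt hs
  rw [Nat.zero_add]
  have hp2 := hp.out.two_le
  have hcp : c < p := by omega
  have hgeo := Sgeo_geo (p := p) (t + 1)
  have hle : c * Sgeo p (t + 1) ≤ (p - 1) * Sgeo p (t + 1) := Nat.mul_le_mul_right _ hc2
  have hn : c * Sgeo p (t + 1) - 1 = (c - 1) + p * (c * Sgeo p t) := by
    rw [Sgeo_succ]
    have : c * (1 + p * Sgeo p t) = c + p * (c * Sgeo p t) := by ring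
    omega
  have hk : p ^ (t + 1) - c * Sgeo p (t + 1) = (p - c) + p * ((p - 1 - c) * Sgeo p t) := by
    have h1 : p ^ (t + 1) - 1 - c * Sgeo p (t + 1) = (p - 1 - c) + p * ((p - 1 - c) * Sgeo p t) := by
      rw [compl_Sgeo c (t+1) hc2, Sgeo_succ]; ring
    omega
  rw [hn, hk]
  apply lucas_unit_step
  · rw [Nat.add_mul_mod_self_left, Nat.add_mul_mod_self_left,
      Nat.mod_eq_of_lt (by omega), Nat.mod_eq_of_lt (by omega)]
    exact not_dvd_choose_of_lt (by omega) (by omega)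
  · rw [Nat.add_mul_div_left _ _ hp.out.pos, Nat.add_mul_div_left _ _ hp.out.pos,
      Nat.div_eq_of_lt (by omega), Nat.div_eq_of_lt (by omega), Nat.zero_add, Nat.zero_add,
      ← compl_Sgeo c t hc2]
    exact not_dvd_choose_geoA c (by omega) hc2 t

private lemma norm_natCast_eq_one_of_not_dvd {n : ℕ} (h : ¬ p ∣ n) : ‖(n : ℚ_[p])‖ = 1 := by
  have h1 : ‖((n : ℤ) : ℚ_[p])‖ ≤ 1 := Padic.norm_int_le_one _
  have h2 : ¬ ‖((n : ℤ) : ℚ_[p])‖ < 1 := by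
    rw [Padic.norm_intCast_lt_one_iff]
    exact_mod_cast h
  push_cast at h1 h2
  linarith [lt_or_eq_of_le h1]

private lemma digitsum_pos {j : ℕ} (hj : j ≠ 0) : 0 < (p.digits j).sum := by
  have hne : p.digits j ≠ [] := Nat.digits_ne_nil_iff_ne_zero.mpr hj
  have hlast := Nat.getLast_digit_ne_zero p hj
  have hmem := List.getLast_mem hne
  have := List.single_le_sum (l := p.digits j) (fun x _ => Nat.zero_le x) _ hmem
  omega

private lemma norm_pow_mul_inv_factorial_le (hodd : p ≠ 2) {j : ℕ} (hj : 2 ≤ j) :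
    ‖(p : ℚ_[p]) ^ j * ((Nat.factorial j : ℚ_[p]))⁻¹‖ ≤ (p : ℝ) ^ (-(2 : ℤ)) := by
  have hp3 : 3 ≤ p := by
    have := hp.out.two_le
    rcases Nat.lt_or_ge p 3 with h | h
    · interval_cases p <;> simp_all
    · exact h
  set v := padicValNat p (Nat.factorial j) with hv
  have hleg := sub_one_mul_padicValNat_factorial (hp := hp) j
  have hds := digitsum_pos (p := p) (by omega : j ≠ 0)
  have hfac_pos : Nat.factorial j ≠ 0 := Nat.factorial_ne_zero j
  have hvle : v + 2 ≤ j := by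
    have h2v : 2 * v ≤ (p - 1) * v := Nat.mul_le_mul_right v (by omega)
    rw [← hv] at hleg
    omega
  obtain ⟨m, hm⟩ : p ^ v ∣ Nat.factorial j := pow_padicValNat_dvd
  have hmdvd : ¬ p ∣ m := by
    intro hd
    refine pow_succ_padicValNat_not_dvd (p := p) hfac_pos ?_
    have hps : p ^ (padicValNat p (Nat.factorial j) + 1) = p ^ v * p := by rw [← hv, pow_succ]
    rw [hps, hm]
    exact Nat.mul_dvd_mul_left _ hd
  have hm0 : m ≠ 0 := by rintro rfl; simp at hm; exact hfac_pos hm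
  have hcast : (Nat.factorial j : ℚ_[p]) = (p : ℚ_[p]) ^ v * (m : ℚ_[p]) := by
    exact_mod_cast congrArg (Nat.cast : ℕ → ℚ_[p]) hm
  have hnm : ‖(m : ℚ_[p])‖ = 1 := norm_natCast_eq_one_of_not_dvd hmdvd
  rw [hcast, mul_inv, norm_mul, norm_mul, norm_inv, norm_inv, hnm, inv_one, mul_one,
    norm_pow, norm_pow, Padic.norm_p]
  have hppos : (0:ℝ) < (p:ℝ) := by positivity
  have h1 : ((p:ℝ)⁻¹) ^ j * (((p:ℝ)⁻¹) ^ v)⁻¹ = (p:ℝ) ^ (-(j:ℤ) + (v:ℤ)) := by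
    rw [inv_pow, inv_pow, inv_inv, zpow_add₀ (ne_of_gt hppos), zpow_neg, zpow_natCast,
      zpow_natCast]
  rw [h1]
  apply zpow_le_zpow_right₀ (by exact_mod_cast by omega : (1:ℝ) ≤ (p:ℝ))
  omega

end NT

noncomputable section POLY
variable {p : ℕ} [hp : Fact p.Prime]

private lemma eval_norm_le {P : MvPolynomial (Fin 4) ℚ_[p]} {v : Fin 4 → ℚ_[p]}
    (hv : ∀ i, ‖v i‖ ≤ 1) {ε : ℝ} (hε : 0 ≤ ε) (h : ∀ m, ‖P.coeff m‖ ≤ ε) :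
    ‖MvPolynomial.eval v P‖ ≤ ε := by
  rw [MvPolynomial.eval_eq]
  apply IsUltrametricDist.norm_sum_le_of_forall_le_of_nonneg hε
  intro d _
  rw [norm_mul]
  calc ‖P.coeff d‖ * ‖∏ i ∈ d.support, v i ^ d i‖ ≤ ε * 1 := by
        refine mul_le_mul (h d) ?_ (norm_nonneg _) hε
        rw [norm_prod]
        exact Finset.prod_le_one (fun i _ => norm_nonneg _)
          (fun i _ => by rw [norm_pow]; exact pow_le_one₀ (norm_nonneg _) (hv i))
    _ = ε := mul_one ε

private def vv (p : ℕ) [Fact p.Prime] (μ : ℚ_[p]) : Fin 4 → ℚ_[p]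
  | 0 => 0
  | 1 => 1
  | 2 => 0
  | 3 => μ

private lemma vv_norm_le {μ : ℚ_[p]} (hμ : ‖μ‖ ≤ 1) : ∀ i, ‖vv p μ i‖ ≤ 1 := by
  intro i
  fin_cases i <;> simp [vv] <;> assumption

private lemma map_truncExp (s : ℕ) (μ : ℚ_[p]) :
    (truncExpPoly p s).map (MvPolynomial.eval (vv p μ)) =
      ∑ j ∈ range (truncDeg p s + 1),
        C ((j.factorial : ℚ_[p])⁻¹ * ((p : ℚ_[p]) * μ) ^ j) * X ^ j := by
  unfold truncExpPoly masterArg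
  rw [Polynomial.map_sum]
  refine Finset.sum_congr rfl fun j _ => ?_
  rw [Polynomial.map_mul, Polynomial.map_pow, Polynomial.map_add, Polynomial.map_mul,
    Polynomial.map_C, Polynomial.map_C, Polynomial.map_C, Polynomial.map_X]
  have h1 : MvPolynomial.eval (vv p μ) (MvPolynomial.C (p : ℚ_[p]) * MvPolynomial.X 2 *
      (MvPolynomial.X 0 + MvPolynomial.X 1)) = 0 := by
    simp [vv]
  have h2 : MvPolynomial.eval (vv p μ) (MvPolynomial.C (p : ℚ_[p]) *
      (MvPolynomial.X 3 - MvPolynomial.X 2)) = (p : ℚ_[p]) * μ := by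
    simp [vv]
  have h3 : MvPolynomial.eval (vv p μ) (MvPolynomial.C ((j.factorial : ℚ_[p])⁻¹)) =
      (j.factorial : ℚ_[p])⁻¹ := by simp
  rw [h1, h2, h3, Polynomial.C_0, zero_add, mul_pow, ← Polynomial.C_pow, ← mul_assoc,
    ← Polynomial.C_mul]

private lemma map_masterPoly (q r s : ℕ) (μ : ℚ_[p]) (i : ℕ) (hi : i = 1 ∨ i = 2) :
    (if i = 1 then masterPoly1 p q r s 0 else masterPoly2 p q r s 0).map
        (MvPolynomial.eval (vv p μ)) =
      (∑ j ∈ range (truncDeg p s + 1),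
        C ((j.factorial : ℚ_[p])⁻¹ * ((p : ℚ_[p]) * μ) ^ j) * X ^ j) *
        C ((-1 : ℚ_[p]) ^ (zExp p q r s 0).toNat) *
        X ^ (if i = 1 then (tExp p q r s 0).toNat - 1 else (tExp p q r s 0).toNat) *
        (X - C 1) ^ (if i = 1 then (tExp p q r s 0).toNat else (tExp p q r s 0).toNat - 1) := by
  have hz : MvPolynomial.eval (vv p μ)
      ((MvPolynomial.X 0 - MvPolynomial.X 1 : MvPolynomial (Fin 4) ℚ_[p]) ^
        (zExp p q r s 0).toNat) = (-1 : ℚ_[p]) ^ (zExp p q r s 0).toNat := by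
    rw [map_pow, map_sub, MvPolynomial.eval_X, MvPolynomial.eval_X]
    norm_num [vv]
  have hx0 : (Polynomial.X - Polynomial.C (MvPolynomial.X 0 : MvPolynomial (Fin 4) ℚ_[p])).map
      (MvPolynomial.eval (vv p μ)) = X := by
    rw [Polynomial.map_sub, Polynomial.map_C, Polynomial.map_X, MvPolynomial.eval_X]
    simp [vv]
  have hx1 : (Polynomial.X - Polynomial.C (MvPolynomial.X 1 : MvPolynomial (Fin 4) ℚ_[p])).map
      (MvPolynomial.eval (vv p μ)) = X - C 1 := by
    rw [Polynomial.map_sub, Polynomial.map_C, Polynomial.map_X, MvPolynomial.eval_X]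
    simp [vv]
  rcases hi with rfl | rfl
  · simp only [↓reduceIte]
    unfold masterPoly1
    rw [Polynomial.map_mul, Polynomial.map_mul, Polynomial.map_mul, map_truncExp,
      Polynomial.map_pow, Polynomial.map_pow, Polynomial.map_C, hz, hx0, hx1]
  · simp only [show ¬(2 = 1) by norm_num, ↓reduceIte, if_false]
    unfold masterPoly2
    rw [Polynomial.map_mul, Polynomial.map_mul, Polynomial.map_mul, map_truncExp,
      Polynomial.map_pow, Polynomial.map_pow, Polynomial.map_C, hz, hx0, hx1]

private lemma coeff_sum_mul (D : ℕ) (c' : ℕ → ℚ_[p]) (g : ℚ_[p][X]) (N : ℕ) :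
    ((∑ j ∈ range D, C (c' j) * X ^ j) * g).coeff N
      = ∑ j ∈ range D, c' j * (if j ≤ N then g.coeff (N - j) else 0) := by
  rw [Finset.sum_mul, Polynomial.finset_sum_coeff]
  refine Finset.sum_congr rfl fun j _ => ?_
  rw [mul_assoc, mul_comm (X ^ j) g, ← mul_assoc, mul_comm (C (c' j)) g, mul_assoc,
    ← mul_assoc g, mul_comm g (C (c' j)), mul_assoc, Polynomial.coeff_C_mul,
    Polynomial.coeff_mul_X_pow']

private def Wc (p : ℕ) [Fact p.Prime] (n b N j : ℕ) : ℚ_[p] :=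
  if j ≤ N then ((X - C 1 : ℚ_[p][X]) ^ n * X ^ b).coeff (N - j) else 0

private lemma XsubC_eq : (X - C 1 : ℚ_[p][X]) = X + C (-1) := by
  rw [map_neg, sub_eq_add_neg]

private lemma Wc_norm_le (n b N j : ℕ) : ‖Wc p n b N j‖ ≤ 1 := by
  unfold Wc
  split_ifs
  · rw [Polynomial.coeff_mul_X_pow']
    split_ifs
    · rw [XsubC_eq, coeff_X_add_C_pow, norm_mul, norm_pow, norm_neg, norm_one, one_pow, one_mul]
      have h := Padic.norm_int_le_one (p := p) (Nat.choose n (N - j - b) : ℤ)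
      push_cast at h
      exact h
    · simp
  · simp

private lemma Wc_val (n b N j : ℕ) (hj : j ≤ N) (hb : b ≤ N - j) :
    Wc p n b N j = (-1 : ℚ_[p]) ^ (n - (N - j - b)) * (Nat.choose n (N - j - b) : ℚ_[p]) := by
  unfold Wc
  rw [if_pos hj, Polynomial.coeff_mul_X_pow', if_pos hb, XsubC_eq, coeff_X_add_C_pow]

private lemma eval_Icoef (q r s : ℕ) (μ : ℚ_[p]) (i : ℕ) (hi : i = 1 ∨ i = 2) :
    MvPolynomial.eval (vv p μ) (Icoef p q r s 0 i 1) =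
      ∑ j ∈ range (truncDeg p s + 1),
        ((j.factorial : ℚ_[p])⁻¹ * ((p : ℚ_[p]) * μ) ^ j) *
          ((-1 : ℚ_[p]) ^ (zExp p q r s 0).toNat *
            Wc p (if i = 1 then (tExp p q r s 0).toNat else (tExp p q r s 0).toNat - 1)
              (if i = 1 then (tExp p q r s 0).toNat - 1 else (tExp p q r s 0).toNat)
              (p ^ s - 1) j) := by
  have h0 : Icoef p q r s 0 i 1 =
      ((if i = 1 then masterPoly1 p q r s 0 else masterPoly2 p q r s 0)).coeff (p ^ s - 1) := by
    unfold Icoef; rw [one_mul]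
  rw [h0, ← Polynomial.coeff_map, map_masterPoly q r s μ i hi]
  set u := (-1 : ℚ_[p]) ^ (zExp p q r s 0).toNat with hu
  set b := (if i = 1 then (tExp p q r s 0).toNat - 1 else (tExp p q r s 0).toNat) with hb
  set n := (if i = 1 then (tExp p q r s 0).toNat else (tExp p q r s 0).toNat - 1) with hn
  have hre : (∑ j ∈ range (truncDeg p s + 1),
        C ((j.factorial : ℚ_[p])⁻¹ * ((p : ℚ_[p]) * μ) ^ j) * X ^ j) * C u * X ^ b *
        (X - C 1) ^ n
      = (∑ j ∈ range (truncDeg p s + 1),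
        C ((j.factorial : ℚ_[p])⁻¹ * ((p : ℚ_[p]) * μ) ^ j) * X ^ j) *
          (C u * ((X - C 1) ^ n * X ^ b)) := by ring
  rw [hre, coeff_sum_mul]
  refine Finset.sum_congr rfl fun j _ => ?_
  unfold Wc
  split_ifs with h
  · rw [Polynomial.coeff_C_mul]
  · simp

private lemma sum_at_zero (D : ℕ) (A : ℕ → ℚ_[p]) :
    ∑ j ∈ range (D + 1), ((j.factorial : ℚ_[p])⁻¹ * ((p : ℚ_[p]) * 0) ^ j) * A j = A 0 := by
  rw [Finset.sum_eq_single 0]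
  · simp
  · intro b _ hb
    simp [zero_pow hb]
  · intro h
    exact absurd (Finset.mem_range.mpr (Nat.succ_pos D)) h

end POLY


section EXTRA
variable {p : ℕ} [hp : Fact p.Prime]

private lemma eval_Icoef1 (q r s : ℕ) (μ : ℚ_[p]) :
    MvPolynomial.eval (vv p μ) (Icoef p q r s 0 1 1) =
      ∑ j ∈ Finset.range (truncDeg p s + 1),
        ((j.factorial : ℚ_[p])⁻¹ * ((p : ℚ_[p]) * μ) ^ j) *
          ((-1 : ℚ_[p]) ^ (zExp p q r s 0).toNat *
            Wc p (tExp p q r s 0).toNat ((tExp p q r s 0).toNat - 1) (p ^ s - 1) j) := by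
  have h := eval_Icoef q r s μ 1 (Or.inl rfl)
  simpa using h

private lemma eval_Icoef2 (q r s : ℕ) (μ : ℚ_[p]) :
    MvPolynomial.eval (vv p μ) (Icoef p q r s 0 2 1) =
      ∑ j ∈ Finset.range (truncDeg p s + 1),
        ((j.factorial : ℚ_[p])⁻¹ * ((p : ℚ_[p]) * μ) ^ j) *
          ((-1 : ℚ_[p]) ^ (zExp p q r s 0).toNat *
            Wc p ((tExp p q r s 0).toNat - 1) (tExp p q r s 0).toNat (p ^ s - 1) j) := by
  have h := eval_Icoef q r s μ 2 (Or.inr rfl)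
  simpa using h

end EXTRA

/-- **Theorem 3.2(ii).** For `κ = r/q` (i.e. `m = 0`), `r, q` coprime,
`1/2 < r/q < 1`, `p = kq+1` an odd prime and `s ≥ 1`, the polynomial `φ_{s,1}` is
nonzero modulo `p²` (not all of its coefficients lie in `p² ℤ_p`) and the polynomial
`ψ_{s,1}` is nonzero modulo `p` (not all of its coefficients lie in `p ℤ_p`). -/
theorem phi_s1_nonzero_mod_p_sq_and_psi_s1_nonzero_mod_p
    (p q r k s : ℕ) [Fact p.Prime] (hodd : p ≠ 2)
    (hcop : Nat.Coprime r q) (hhalf : q < 2 * r) (hlt : r < q)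
    (hk : 0 < k) (hp : p = k * q + 1) (hs : 0 < s) :
    ¬ (∀ mon : Fin 4 →₀ ℕ, ‖(phiPoly p q r s 0 1).coeff mon‖ ≤ (p : ℝ) ^ (-(2 : ℤ))) ∧
    ¬ (∀ mon : Fin 4 →₀ ℕ, ‖(psiPoly p q r s 0 1).coeff mon‖ ≤ (p : ℝ) ^ (-(1 : ℤ))) := by
  classical
  have hp2 : 2 ≤ p := (Fact.out : p.Prime).two_le
  have hp3 : 3 ≤ p := by
    rcases Nat.lt_or_ge p 3 with h | h
    · interval_cases p <;> simp_all
    · exact h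
  have hpodd : p % 2 = 1 :=
    Nat.odd_iff.mp ((Fact.out : p.Prime).eq_two_or_odd'.resolve_left hodd)
  have hr1 : 1 ≤ r := by omega
  have hq1 : 1 ≤ q := by omega
  set c := r * k with hc
  have hc1 : 1 ≤ c := by
    have := Nat.mul_pos (by omega : 0 < r) hk
    omega
  have hp' : p = q * k + 1 := by rw [hp, Nat.mul_comm]
  have hc2 : c ≤ p - 2 := by
    have h1 : r * k ≤ (q - 1) * k := Nat.mul_le_mul_right k (by omega)
    rw [Nat.sub_mul, one_mul] at h1
    omega
  have h2c : p + 1 ≤ 2 * c := by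
    have h1 : (q + 1) * k ≤ (2 * r) * k := Nat.mul_le_mul_right k (by omega)
    have h2 : (q + 1) * k = q * k + k := by ring
    have h3 : (2 * r) * k = 2 * c := by rw [hc]; ring
    omega
  have hgeo : (p - 1) * Sgeo p s + 1 = p ^ s := Sgeo_geo s
  have hS1 : 1 ≤ Sgeo p s := Sgeo_pos hs
  have hq0 : (q : ℤ) ≠ 0 := by exact_mod_cast (by omega : q ≠ 0)
  have hps1le : 1 ≤ p ^ s := Nat.one_le_pow _ _ (by omega)
  have hps3 : 3 ≤ p ^ s := le_trans hp3 (Nat.le_self_pow hs.ne' p)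
  have hpsodd : p ^ s % 2 = 1 := by
    rw [Nat.pow_mod, hpodd, Nat.one_pow, Nat.one_mod_eq_one.mpr (by omega)]
  have hpm1 : p - 1 = k * q := by omega
  have hnat : p ^ s - 1 = k * q * Sgeo p s := by rw [← hpm1]; omega
  have htE : (tExp p q r s 0).toNat = c * Sgeo p s := by
    have hcalc : (r : ℤ) * ((p : ℤ) ^ s - 1) = (q : ℤ) * ((c * Sgeo p s : ℕ) : ℤ) := by
      have h1 : ((p : ℤ)) ^ s - 1 = ((p ^ s - 1 : ℕ) : ℤ) := by
        rw [Nat.cast_sub hps1le]; push_cast; ring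
      rw [h1, hnat, hc]; push_cast; ring
    unfold tExp
    rw [sub_zero, hcalc, Int.mul_ediv_cancel_left _ hq0, Int.toNat_natCast]
  set e := c * Sgeo p s with he
  have he2 : e ≤ p ^ s - 2 := by
    have h1 : c * Sgeo p s ≤ (p - 2) * Sgeo p s := Nat.mul_le_mul_right _ hc2
    have h2 : (p - 2) * Sgeo p s + Sgeo p s = (p - 1) * Sgeo p s := by
      rw [← Nat.succ_mul]
      congr 1
      omega
    omega
  have h2e : p ^ s + 1 ≤ 2 * e := by
    have h1 : (p + 1) * Sgeo p s ≤ (2 * c) * Sgeo p s := Nat.mul_le_mul_right _ h2c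
    have h2 : (p + 1) * Sgeo p s = (p - 1) * Sgeo p s + 2 * Sgeo p s := by
      rw [← Nat.add_mul]
      congr 1
      omega
    have h3 : (2 * c) * Sgeo p s = 2 * e := by rw [he]; ring
    omega
  have he1 : 1 ≤ e := by
    have := Nat.mul_pos (by omega : 0 < c) (by omega : 0 < Sgeo p s)
    omega
  have hSmod : Sgeo p s = 1 + p * Sgeo p (s - 1) := by
    obtain ⟨t, rfl⟩ : ∃ t, s = t + 1 := ⟨s - 1, by omega⟩
    simpa using Sgeo_succ t
  have hpS : ¬ p ∣ Sgeo p s := by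
    intro hd
    have h1 := Nat.dvd_sub hd (dvd_mul_right p (Sgeo p (s - 1)))
    rw [hSmod, Nat.add_sub_cancel] at h1
    have := Nat.dvd_one.mp h1
    omega
  have hpe : ¬ p ∣ e := by
    intro hd
    rcases ((Fact.out : p.Prime).dvd_mul.mp hd) with h | h
    · exact absurd (Nat.le_of_dvd (by omega) h) (by omega)
    · exact hpS h
  have hppow1 : ¬ p ∣ p ^ s - 1 := by
    intro hd
    have h1 : p ∣ p ^ s := dvd_pow_self p hs.ne'
    have h2 := Nat.dvd_sub h1 hd
    rw [Nat.sub_sub_self hps1le] at h2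
    exact absurd (Nat.le_of_dvd one_pos h2) (by omega)
  set f := p ^ s - 1 - e with hf
  have hf1 : 1 ≤ f := by omega
  have hCA : ¬ p ∣ Nat.choose e f := by
    rw [he, hf, he]
    exact not_dvd_choose_geoA c (by omega) (by omega) s
  have hCB : ¬ p ∣ Nat.choose (e - 1) (p ^ s - e) := by
    rw [he]
    exact not_dvd_choose_geoB c s hs (by omega) (by omega) hc1
  have hkey : e * (Nat.choose e f + Nat.choose (e - 1) (f - 1)) = (p ^ s - 1) * Nat.choose e f := by
    have h1 : e * Nat.choose (e - 1) (f - 1) = Nat.choose e f * f := by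
      have h := Nat.add_one_mul_choose_eq (e - 1) (f - 1)
      rw [show e - 1 + 1 = e by omega, show f - 1 + 1 = f by omega] at h
      exact h
    have h2 : e + f = p ^ s - 1 := by omega
    rw [Nat.mul_add, h1, mul_comm (Nat.choose e f) f, ← Nat.add_mul, h2, Nat.mul_comm]
  have hg1 : ¬ p ∣ (Nat.choose e f + Nat.choose (e - 1) (f - 1)) := by
    intro hd
    have hd2 : p ∣ (p ^ s - 1) * Nat.choose e f := by
      rw [← hkey]
      exact hd.mul_left e
    rcases ((Fact.out : p.Prime).dvd_mul.mp hd2) with h | h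
    · exact hppow1 h
    · exact hCA h
  -- norm facts
  have hun : ‖((-1 : ℚ_[p]) ^ (zExp p q r s 0).toNat)‖ = 1 := by
    rw [norm_pow, norm_neg, norm_one, one_pow]
  have hx1 : (1 : ℝ) < (p : ℝ) := by exact_mod_cast (by omega : 1 < p)
  -- Wc values
  have hoddexp : ∃ w, e - (p ^ s - e) = 2 * w + 1 := ⟨(e - (p ^ s - e) - 1) / 2, by omega⟩
  have hevenexp : ∃ w, e - f = 2 * w := ⟨(e - f) / 2, by omega⟩
  have hWa : Wc p e (e - 1) (p ^ s - 1) 0 = -(Nat.choose e (p ^ s - e) : ℚ_[p]) := by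
    rw [Wc_val e (e - 1) (p ^ s - 1) 0 (by omega) (by omega)]
    rw [show p ^ s - 1 - 0 - (e - 1) = p ^ s - e by omega]
    obtain ⟨w, hw⟩ := hoddexp
    rw [hw, pow_succ, pow_mul]
    norm_num
  have hWb : Wc p (e - 1) e (p ^ s - 1) 0 = -(Nat.choose (e - 1) f : ℚ_[p]) := by
    rw [Wc_val (e - 1) e (p ^ s - 1) 0 (by omega) (by omega)]
    rw [show p ^ s - 1 - 0 - e = f by omega, show e - 1 - f = e - (p ^ s - e) by omega]
    obtain ⟨w, hw⟩ := hoddexp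
    rw [hw, pow_succ, pow_mul]
    norm_num
  have hW11 : Wc p e (e - 1) (p ^ s - 1) 1 = (Nat.choose e f : ℚ_[p]) := by
    rw [Wc_val e (e - 1) (p ^ s - 1) 1 (by omega) (by omega)]
    rw [show p ^ s - 1 - 1 - (e - 1) = f by omega]
    obtain ⟨w, hw⟩ := hevenexp
    rw [hw, pow_mul]
    norm_num
  have hW21 : Wc p (e - 1) e (p ^ s - 1) 1 = (Nat.choose (e - 1) (f - 1) : ℚ_[p]) := by
    rw [Wc_val (e - 1) e (p ^ s - 1) 1 (by omega) (by omega)]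
    rw [show p ^ s - 1 - 1 - e = f - 1 by omega, show e - 1 - (f - 1) = e - f by omega]
    obtain ⟨w, hw⟩ := hevenexp
    rw [hw, pow_mul]
    norm_num
  have hPascal : Nat.choose e (p ^ s - e) = Nat.choose (e - 1) f + Nat.choose (e - 1) (p ^ s - e) := by
    have h := Nat.choose_succ_succ (e - 1) (p ^ s - 1 - e)
    simp only [Nat.succ_eq_add_one] at h
    rw [show e - 1 + 1 = e by omega, show p ^ s - 1 - e + 1 = p ^ s - e by omega, ← hf] at h
    exact h
  constructor
  · -- φ part
    intro hcon
    have hb1 : ‖MvPolynomial.eval (vv p 1) (phiPoly p q r s 0 1)‖ ≤ (p : ℝ) ^ (-(2 : ℤ)) :=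
      eval_norm_le (vv_norm_le (by simp)) (by positivity) hcon
    have hb0 : ‖MvPolynomial.eval (vv p 0) (phiPoly p q r s 0 1)‖ ≤ (p : ℝ) ^ (-(2 : ℤ)) :=
      eval_norm_le (vv_norm_le (by simp)) (by positivity) hcon
    have hval : ∀ μ : ℚ_[p], MvPolynomial.eval (vv p μ) (phiPoly p q r s 0 1) =
        ∑ j ∈ Finset.range (truncDeg p s + 1),
          ((j.factorial : ℚ_[p])⁻¹ * ((p : ℚ_[p]) * μ) ^ j) *
            ((-1 : ℚ_[p]) ^ (zExp p q r s 0).toNat *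
              (Wc p e (e - 1) (p ^ s - 1) j + Wc p (e - 1) e (p ^ s - 1) j)) := by
      intro μ
      unfold phiPoly
      rw [map_add, eval_Icoef1, eval_Icoef2, ← Finset.sum_add_distrib]
      refine Finset.sum_congr rfl fun j _ => ?_
      rw [htE]
      ring
    set F : ℕ → ℚ_[p] := fun j =>
      (((j.factorial : ℚ_[p])⁻¹ * ((p : ℚ_[p]) * 1) ^ j) -
        ((j.factorial : ℚ_[p])⁻¹ * ((p : ℚ_[p]) * 0) ^ j)) *
        ((-1 : ℚ_[p]) ^ (zExp p q r s 0).toNat *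
          (Wc p e (e - 1) (p ^ s - 1) j + Wc p (e - 1) e (p ^ s - 1) j)) with hFdef
    have hΔval : MvPolynomial.eval (vv p 1) (phiPoly p q r s 0 1) -
        MvPolynomial.eval (vv p 0) (phiPoly p q r s 0 1) =
        ∑ j ∈ Finset.range (truncDeg p s + 1), F j := by
      rw [hval 1, hval 0, ← Finset.sum_sub_distrib]
      refine Finset.sum_congr rfl fun j _ => ?_
      simp only [hFdef]
      ring
    obtain ⟨d2, hd2⟩ : ∃ d2, truncDeg p s = d2 + 1 := ⟨s * (p - 1) / (p - 2), rfl⟩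
    have hsplit : ∑ j ∈ Finset.range (truncDeg p s + 1), F j =
        (∑ j ∈ Finset.range d2, F (j + 1 + 1) + F (0 + 1)) + F 0 := by
      rw [hd2, Finset.sum_range_succ', Finset.sum_range_succ']
    have hF0 : F 0 = 0 := by
      simp only [hFdef]
      simp
    have hFnorm1 : ‖F 1‖ = (p : ℝ)⁻¹ := by
      have hF1 : F 1 = (p : ℚ_[p]) * ((-1 : ℚ_[p]) ^ (zExp p q r s 0).toNat *
          ((Nat.choose e f + Nat.choose (e - 1) (f - 1) : ℕ) : ℚ_[p])) := by
        simp only [hFdef]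
        simp only [hW11, hW21, Nat.factorial_one, Nat.cast_one, inv_one, mul_one, mul_zero,
          pow_one, one_mul, sub_zero]
        push_cast
        ring
      rw [hF1, norm_mul, norm_mul, Padic.norm_p, hun,
        norm_natCast_eq_one_of_not_dvd hg1, one_mul, mul_one]
    have hrest : ‖∑ j ∈ Finset.range d2, F (j + 1 + 1)‖ ≤ (p : ℝ) ^ (-(2 : ℤ)) := by
      apply IsUltrametricDist.norm_sum_le_of_forall_le_of_nonneg (by positivity)
      intro j _
      have hzero : ((p : ℚ_[p]) * 0) ^ (j + 1 + 1) = 0 := by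
        rw [mul_zero, zero_pow (by omega)]
      have hFj : F (j + 1 + 1) = (((j + 1 + 1).factorial : ℚ_[p])⁻¹ * (p : ℚ_[p]) ^ (j + 1 + 1)) *
          ((-1 : ℚ_[p]) ^ (zExp p q r s 0).toNat *
            (Wc p e (e - 1) (p ^ s - 1) (j + 1 + 1) + Wc p (e - 1) e (p ^ s - 1) (j + 1 + 1))) := by
        simp only [hFdef]
        rw [hzero]
        simp only [mul_zero, sub_zero, mul_one]
      rw [hFj, norm_mul]
      have h1 : ‖((j + 1 + 1).factorial : ℚ_[p])⁻¹ * (p : ℚ_[p]) ^ (j + 1 + 1)‖ ≤ (p : ℝ) ^ (-(2 : ℤ)) := by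
        rw [mul_comm]
        exact norm_pow_mul_inv_factorial_le hodd (by omega)
      have h2 : ‖(-1 : ℚ_[p]) ^ (zExp p q r s 0).toNat *
          (Wc p e (e - 1) (p ^ s - 1) (j + 1 + 1) + Wc p (e - 1) e (p ^ s - 1) (j + 1 + 1))‖ ≤ 1 := by
        rw [norm_mul, hun, one_mul]
        refine le_trans (Padic.nonarchimedean _ _) ?_
        exact max_le (Wc_norm_le _ _ _ _) (Wc_norm_le _ _ _ _)
      calc ‖((j + 1 + 1).factorial : ℚ_[p])⁻¹ * (p : ℚ_[p]) ^ (j + 1 + 1)‖ * ‖_‖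
          ≤ (p : ℝ) ^ (-(2 : ℤ)) * 1 := mul_le_mul h1 h2 (norm_nonneg _) (by positivity)
        _ = (p : ℝ) ^ (-(2 : ℤ)) := mul_one _
    have hΔle : ‖MvPolynomial.eval (vv p 1) (phiPoly p q r s 0 1) -
        MvPolynomial.eval (vv p 0) (phiPoly p q r s 0 1)‖ ≤ (p : ℝ) ^ (-(2 : ℤ)) := by
      rw [sub_eq_add_neg]
      refine le_trans (Padic.nonarchimedean _ _) ?_
      rw [norm_neg]
      exact max_le hb1 hb0
    have hF1eq : F (0 + 1) = (MvPolynomial.eval (vv p 1) (phiPoly p q r s 0 1) -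
        MvPolynomial.eval (vv p 0) (phiPoly p q r s 0 1)) - ∑ j ∈ Finset.range d2, F (j + 1 + 1) := by
      rw [hΔval, hsplit, hF0]
      ring
    have hcontr : (p : ℝ)⁻¹ ≤ (p : ℝ) ^ (-(2 : ℤ)) + (p : ℝ) ^ (-(2 : ℤ)) := by
      have h := norm_sub_le (MvPolynomial.eval (vv p 1) (phiPoly p q r s 0 1) -
        MvPolynomial.eval (vv p 0) (phiPoly p q r s 0 1)) (∑ j ∈ Finset.range d2, F (j + 1 + 1))
      rw [← hF1eq] at h
      have : F (0 + 1) = F 1 := by norm_num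
      rw [this, hFnorm1] at h
      exact le_trans h (add_le_add hΔle hrest)
    have hzpow : (p : ℝ) ^ (-(2 : ℤ)) = ((p : ℝ) * (p : ℝ))⁻¹ := by
      rw [zpow_neg, show ((2 : ℤ)) = ((2 : ℕ) : ℤ) by norm_num, zpow_natCast, sq]
    rw [hzpow] at hcontr
    have hppos : (0 : ℝ) < (p : ℝ) := by positivity
    have hple : (3 : ℝ) ≤ (p : ℝ) := by exact_mod_cast hp3
    have h1 : (p : ℝ) * (p : ℝ) * (p : ℝ)⁻¹ ≤ (p : ℝ) * (p : ℝ) * (((p : ℝ) * (p : ℝ))⁻¹ + ((p : ℝ) * (p : ℝ))⁻¹) :=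
      mul_le_mul_of_nonneg_left hcontr (by positivity)
    rw [mul_add, mul_inv_cancel₀ (by positivity)] at h1
    have h2 : (p : ℝ) * (p : ℝ) * (p : ℝ)⁻¹ = (p : ℝ) := by
      field_simp
    rw [h2] at h1
    linarith
  · -- ψ part
    intro hcon
    have hb : ‖MvPolynomial.eval (vv p 0) (psiPoly p q r s 0 1)‖ ≤ (p : ℝ) ^ (-(1 : ℤ)) :=
      eval_norm_le (vv_norm_le (by simp)) (by positivity) hcon
    have hval : MvPolynomial.eval (vv p 0) (psiPoly p q r s 0 1) =
        (-1 : ℚ_[p]) ^ (zExp p q r s 0).toNat * Wc p e (e - 1) (p ^ s - 1) 0 -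
          (-1 : ℚ_[p]) ^ (zExp p q r s 0).toNat * Wc p (e - 1) e (p ^ s - 1) 0 := by
      unfold psiPoly
      rw [map_sub, eval_Icoef1, eval_Icoef2, htE, sum_at_zero, sum_at_zero]
    have hvv : MvPolynomial.eval (vv p 0) (psiPoly p q r s 0 1) =
        -((-1 : ℚ_[p]) ^ (zExp p q r s 0).toNat * (Nat.choose (e - 1) (p ^ s - e) : ℚ_[p])) := by
      rw [hval, hWa, hWb]
      have hPc : (Nat.choose e (p ^ s - e) : ℚ_[p]) =
          (Nat.choose (e - 1) f : ℚ_[p]) + (Nat.choose (e - 1) (p ^ s - e) : ℚ_[p]) := by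
        exact_mod_cast congrArg (Nat.cast : ℕ → ℚ_[p]) hPascal
      rw [hPc]
      ring
    have hnval : ‖MvPolynomial.eval (vv p 0) (psiPoly p q r s 0 1)‖ = 1 := by
      rw [hvv, norm_neg, norm_mul, hun, norm_natCast_eq_one_of_not_dvd hCB, one_mul]
    rw [hnval] at hb
    have : (p : ℝ) ^ (-(1 : ℤ)) < 1 := by
      rw [zpow_neg, zpow_one]
      exact inv_lt_one_of_one_lt₀ hx1
    linarith
end

section
/- (Proportionality of the two eigenfunctions) Let r, q be coprime positive integers with 1/2 < r/q < 1, m an integer, κ = r/q + m, p = kq+1 an odd prime, and s a positive integer such that the positivity conditions p^s + (1−p^s)r/q + m' > 0 and (p^s−1)r/q − m' > 0 hold for both m' = m and m' = m−1. Then for every positive integer d, the congruence of polynomials (λ_2−λ_1) · p · ψ_{s,d}(z,λ,κ−1) ≡ κ · φ_{s,d}(z,λ,κ) (mod p^s) holds in ℤ_p[z_1,z_2,λ_1,λ_2], where κ = r/q + m ∈ ℤ_p. -/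
open Finset Polynomial

/-!
Write `Φ = Φ_s(·, κ)`, `a = pλ₁(z₁+z₂) + p(λ₂−λ₁)t` and `T = (p^s−1)r/q − m`. Because
`(t−z₂) − (t−z₁) = z₁ − z₂`, the difference `Φ_{s,1} − Φ_{s,2}` taken at `κ − 1` is `Φ` itself,
so `ψ_{s,d}(κ−1)` is the coefficient of `t^{dp^s−1}` in `Φ`. Since
`E_s' = p(λ₂−λ₁)(E_s − a^{d(s)}/d(s)!)`, differentiating in `t` gives
`Φ' = p(λ₂−λ₁)(Φ − Φ_top) + T(Φ_{s,1} + Φ_{s,2})`, where `Φ_top` is `Φ` with `E_s` replaced by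
`a^{d(s)}/d(s)!`. Comparing coefficients of `t^{dp^s−1}`,
`p(λ₂−λ₁)ψ_{s,d}(κ−1) − κφ_{s,d}(κ)
  = dp^s·[t^{dp^s}]Φ + p(λ₂−λ₁)[t^{dp^s−1}]Φ_top − (T+κ)φ_{s,d}(κ)`.
Every polynomial here has coefficients in `ℤ_p` (the coefficients `p^k/k!` of `E_s` are
integral), `T + κ = rp^s/q` with `q` a `p`-adic unit, and `p·Φ_top` is `p^{d(s)+1}/d(s)!` times an
integral polynomial, a factor divisible by `p^s` since Legendre's formula gives
`v_p(d(s)!) + s < d(s)`.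
-/

noncomputable section

section Integrality

variable (p : ℕ) [Fact p.Prime] (σ : Type*)

abbrev mvPolyPadicIntMap : MvPolynomial σ ℤ_[p] →+* MvPolynomial σ ℚ_[p] :=
  MvPolynomial.map PadicInt.Coe.ringHom

variable {p σ}

theorem norm_coeff_le_one_of_mem_range {P : MvPolynomial σ ℚ_[p]}
    (hP : P ∈ (mvPolyPadicIntMap p σ).range) (n : σ →₀ ℕ) : ‖P.coeff n‖ ≤ 1 := by
  obtain ⟨P, rfl⟩ := hP
  rw [MvPolynomial.coeff_map]
  exact (P.coeff n).2

theorem mvPolynomial_C_mem_range {c : ℚ_[p]} (hc : ‖c‖ ≤ 1) :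
    MvPolynomial.C c ∈ (mvPolyPadicIntMap p σ).range :=
  ⟨MvPolynomial.C ⟨c, hc⟩, MvPolynomial.map_C _ _⟩

theorem mvPolynomial_X_mem_range (i : σ) :
    MvPolynomial.X i ∈ (mvPolyPadicIntMap p σ).range :=
  ⟨MvPolynomial.X i, MvPolynomial.map_X _ _⟩

theorem X_mem_liftsRing :
    (X : Polynomial (MvPolynomial σ ℚ_[p])) ∈ liftsRing (mvPolyPadicIntMap p σ) :=
  (lifts_iff_liftsRing _ _).1 (X_mem_lifts _)

theorem C_mem_liftsRing {a : MvPolynomial σ ℚ_[p]} (ha : a ∈ (mvPolyPadicIntMap p σ).range) :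
    C a ∈ liftsRing (mvPolyPadicIntMap p σ) :=
  (lifts_iff_liftsRing _ _).1 (C'_mem_lifts ha)

theorem coeff_mem_range_of_mem_liftsRing {f : Polynomial (MvPolynomial σ ℚ_[p])}
    (hf : f ∈ liftsRing (mvPolyPadicIntMap p σ)) (n : ℕ) :
    f.coeff n ∈ (mvPolyPadicIntMap p σ).range :=
  (lifts_iff_coeff_lifts f).1 ((lifts_iff_liftsRing _ f).2 hf) n

theorem congMod_of_sub_eq_C_mul {s : ℕ} {P Q R : MvPolynomial (Fin 4) ℚ_[p]}
    (hR : R ∈ (mvPolyPadicIntMap p (Fin 4)).range)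
    (h : P - Q = MvPolynomial.C ((p : ℚ_[p]) ^ s) * R) : CongMod p s P Q := by
  intro n
  rw [h, MvPolynomial.coeff_C_mul, norm_mul, Padic.norm_p_pow]
  exact mul_le_of_le_one_right (by positivity) (norm_coeff_le_one_of_mem_range hR n)

end Integrality

section PadicNorms

variable {p : ℕ} [Fact p.Prime]

theorem norm_prime_pow_div_factorial_le_one {a k : ℕ} (h : padicValNat p k.factorial ≤ a) :
    ‖(p : ℚ_[p]) ^ a * (k.factorial : ℚ_[p])⁻¹‖ ≤ 1 := by
  have hk : (k.factorial : ℚ_[p]) ≠ 0 := by exact_mod_cast k.factorial_ne_zero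
  rw [norm_mul, norm_inv, Padic.norm_p_pow, Padic.norm_eq_zpow_neg_valuation hk,
    Padic.valuation_natCast, ← zpow_neg, neg_neg,
    ← zpow_add₀ (by exact_mod_cast (Fact.out : p.Prime).ne_zero)]
  exact zpow_le_one_of_nonpos₀ (by exact_mod_cast (Fact.out : p.Prime).one_le) (by omega)

theorem padicValNat_factorial_truncDeg_add_lt (hodd : p ≠ 2) (s : ℕ) :
    padicValNat p (truncDeg p s).factorial + s < truncDeg p s := by
  have hp3 : 3 ≤ p := by have := (Fact.out : p.Prime).two_le; omega
  have hval : (p - 1) * padicValNat p (truncDeg p s).factorial < truncDeg p s :=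
    sub_one_mul_padicValNat_factorial_lt_of_ne_zero p (Nat.succ_ne_zero _)
  have hdeg : s * (p - 1) < (p - 2) * truncDeg p s := Nat.lt_mul_div_succ _ (by omega)
  generalize truncDeg p s = D at hval hdeg ⊢
  generalize padicValNat p D.factorial = v at hval ⊢
  obtain ⟨a, rfl⟩ : ∃ a, p = a + 3 := ⟨p - 3, by omega⟩
  simp only [show a + 3 - 1 = a + 2 by omega, show a + 3 - 2 = a + 1 by omega] at hval hdeg
  nlinarith

theorem norm_natCast_eq_one_of_modEq_one {q : ℕ} (hpq : p ≡ 1 [MOD q]) :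
    ‖(q : ℚ_[p])‖ = 1 :=
  Padic.norm_natCast_eq_one_iff.2 (hpq.gcd_eq.trans (Nat.gcd_one_left q))

end PadicNorms

theorem tExp_add_div_add {K : Type*} [Field K] [CharZero K] {p q : ℕ} (r : ℕ)
    (hpq : p ≡ 1 [MOD q]) (s : ℕ) (m : ℤ) :
    (tExp p q r s m : K) + ((r : K) / q + m) = r / q * p ^ s := by
  rcases eq_or_ne q 0 with rfl | hq
  · simp [tExp]
  have hdvd : (q : ℤ) ∣ (p : ℤ) ^ s - 1 := by
    simpa using Nat.modEq_iff_dvd.1 (hpq.pow s).symm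
  obtain ⟨c, hc⟩ := hdvd.mul_left r
  have htExp : tExp p q r s m = c - m := by
    rw [tExp, hc, Int.mul_ediv_cancel_left _ (by exact_mod_cast hq)]
  have hcK : (r : K) * ((p : K) ^ s - 1) = q * c := by exact_mod_cast hc
  rw [htExp]
  push_cast
  field_simp
  linear_combination -hcK

section DerivativeIdentities

variable {S : Type*} [CommRing S]

theorem derivative_sum_C_mul_pow (f : S[X]) (c : ℕ → S) (hc : ∀ k, c (k + 1) * (k + 1) = c k)
    (D : ℕ) :
    derivative (∑ k ∈ range (D + 1), C (c k) * f ^ k) =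
      derivative f * (∑ k ∈ range (D + 1), C (c k) * f ^ k - C (c D) * f ^ D) := by
  induction D with
  | zero => simp
  | succ D ih =>
    rw [sum_range_succ, derivative_add, ih, derivative_C_mul, derivative_pow, ← hc D]
    simp only [map_mul, map_add, map_natCast, map_one, Nat.cast_add, Nat.cast_one,
      Nat.add_sub_cancel]
    ring

theorem derivative_X_sub_C_mul_X_sub_C_pow (a b : S) (n : ℕ) :
    derivative (((X - C a) * (X - C b)) ^ n) =
      C (n : S) * ((X - C a) ^ (n - 1) * (X - C b) ^ n + (X - C a) ^ n * (X - C b) ^ (n - 1)) := by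
  rcases n with _ | n
  · simp
  · rw [mul_pow, derivative_mul, derivative_X_sub_C_pow, derivative_X_sub_C_pow,
      Nat.add_sub_cancel]
    simp only [map_natCast]
    ring

theorem coeff_derivative_sub_one (f : S[X]) {n : ℕ} (hn : n ≠ 0) :
    (derivative f).coeff (n - 1) = f.coeff n * n := by
  obtain ⟨n, rfl⟩ := Nat.exists_eq_succ_of_ne_zero hn
  simp [coeff_derivative]

end DerivativeIdentities

section MasterPolynomial

variable (p : ℕ) [Fact p.Prime]

def masterArgDivP : Polynomial (MvPolynomial (Fin 4) ℚ_[p]) :=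
  C (MvPolynomial.X 2 * (MvPolynomial.X 0 + MvPolynomial.X 1)) +
    C (MvPolynomial.X 3 - MvPolynomial.X 2) * X

def masterPolyTop (q r s : ℕ) (m' : ℤ) : Polynomial (MvPolynomial (Fin 4) ℚ_[p]) :=
  C (MvPolynomial.C (((truncDeg p s).factorial : ℚ_[p])⁻¹)) * masterArg p ^ truncDeg p s *
    C ((MvPolynomial.X 0 - MvPolynomial.X 1) ^ (zExp p q r s m').toNat) *
    ((X - C (MvPolynomial.X 0)) * (X - C (MvPolynomial.X 1))) ^ (tExp p q r s m').toNat

variable {p}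

theorem masterArg_eq_C_mul : masterArg p = C (MvPolynomial.C (p : ℚ_[p])) * masterArgDivP p := by
  simp only [masterArg, masterArgDivP, map_mul]
  ring

theorem masterArgDivP_mem : masterArgDivP p ∈ liftsRing (mvPolyPadicIntMap p (Fin 4)) := by
  unfold masterArgDivP
  apply_rules [add_mem, mul_mem, sub_mem, C_mem_liftsRing, X_mem_liftsRing,
    mvPolynomial_X_mem_range]

theorem truncExpPoly_mem (s : ℕ) :
    truncExpPoly p s ∈ liftsRing (mvPolyPadicIntMap p (Fin 4)) := by
  have hterm (k : ℕ) : C (MvPolynomial.C ((k.factorial : ℚ_[p])⁻¹)) * masterArg p ^ k =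
      C (MvPolynomial.C ((p : ℚ_[p]) ^ k * (k.factorial : ℚ_[p])⁻¹)) * masterArgDivP p ^ k := by
    simp only [masterArg_eq_C_mul, map_mul, map_pow]
    ring
  simp only [truncExpPoly, hterm]
  refine sum_mem fun k _ => mul_mem (C_mem_liftsRing (mvPolynomial_C_mem_range ?_))
    (pow_mem masterArgDivP_mem k)
  exact norm_prime_pow_div_factorial_le_one (padicValNat_factorial_le p k)

theorem masterPoly_mem (q r s : ℕ) (m' : ℤ) :
    masterPoly p q r s m' ∈ liftsRing (mvPolyPadicIntMap p (Fin 4)) := by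
  unfold masterPoly
  apply_rules [mul_mem, pow_mem, sub_mem, C_mem_liftsRing, X_mem_liftsRing,
    mvPolynomial_X_mem_range, truncExpPoly_mem]

theorem masterPoly1_mem (q r s : ℕ) (m' : ℤ) :
    masterPoly1 p q r s m' ∈ liftsRing (mvPolyPadicIntMap p (Fin 4)) := by
  unfold masterPoly1
  apply_rules [mul_mem, pow_mem, sub_mem, C_mem_liftsRing, X_mem_liftsRing,
    mvPolynomial_X_mem_range, truncExpPoly_mem]

theorem masterPoly2_mem (q r s : ℕ) (m' : ℤ) :
    masterPoly2 p q r s m' ∈ liftsRing (mvPolyPadicIntMap p (Fin 4)) := by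
  unfold masterPoly2
  apply_rules [mul_mem, pow_mem, sub_mem, C_mem_liftsRing, X_mem_liftsRing,
    mvPolynomial_X_mem_range, truncExpPoly_mem]

theorem exists_C_mul_masterPolyTop_eq (hodd : p ≠ 2) (q r s : ℕ) (m' : ℤ) :
    ∃ R ∈ liftsRing (mvPolyPadicIntMap p (Fin 4)),
      C (MvPolynomial.C (p : ℚ_[p])) * masterPolyTop p q r s m' =
        C (MvPolynomial.C ((p : ℚ_[p]) ^ s)) * R := by
  have hD := padicValNat_factorial_truncDeg_add_lt hodd s
  set D := truncDeg p s
  set c := (p : ℚ_[p]) ^ (D + 1 - s) * (D.factorial : ℚ_[p])⁻¹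
  set Q : Polynomial (MvPolynomial (Fin 4) ℚ_[p]) :=
    C ((MvPolynomial.X 0 - MvPolynomial.X 1) ^ (zExp p q r s m').toNat) *
      ((X - C (MvPolynomial.X 0)) * (X - C (MvPolynomial.X 1))) ^ (tExp p q r s m').toNat
  have hc : ‖c‖ ≤ 1 := norm_prime_pow_div_factorial_le_one (by omega)
  have hQ : Q ∈ liftsRing (mvPolyPadicIntMap p (Fin 4)) := by
    apply_rules [mul_mem, pow_mem, sub_mem, C_mem_liftsRing, X_mem_liftsRing,
      mvPolynomial_X_mem_range]
  refine ⟨C (MvPolynomial.C c) * masterArgDivP p ^ D * Q,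
    mul_mem (mul_mem (C_mem_liftsRing (mvPolynomial_C_mem_range hc))
      (pow_mem masterArgDivP_mem D)) hQ, ?_⟩
  have hscalar : (C (MvPolynomial.C (p : ℚ_[p])) : Polynomial (MvPolynomial (Fin 4) ℚ_[p])) *
      C (MvPolynomial.C ((D.factorial : ℚ_[p])⁻¹ * (p : ℚ_[p]) ^ D)) =
        C (MvPolynomial.C ((p : ℚ_[p]) ^ s)) * C (MvPolynomial.C c) := by
    simp only [← map_mul, c, ← mul_assoc, ← pow_add, show s + (D + 1 - s) = D + 1 by omega,
      pow_succ]
    ring_nf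
  have hmasterPolyTop : masterPolyTop p q r s m' =
      C (MvPolynomial.C ((D.factorial : ℚ_[p])⁻¹ * (p : ℚ_[p]) ^ D)) *
        masterArgDivP p ^ D * Q := by
    simp only [masterPolyTop, masterArg_eq_C_mul, mul_pow, map_mul, map_pow, Q]
    ring
  rw [hmasterPolyTop]
  linear_combination (masterArgDivP p ^ D * Q) * hscalar

theorem derivative_truncExpPoly (s : ℕ) :
    derivative (truncExpPoly p s) =
      C (MvPolynomial.C (p : ℚ_[p]) * (MvPolynomial.X 3 - MvPolynomial.X 2)) *
        (truncExpPoly p s - C (MvPolynomial.C (((truncDeg p s).factorial : ℚ_[p])⁻¹)) *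
          masterArg p ^ truncDeg p s) := by
  have hc (k : ℕ) : MvPolynomial.C (((k + 1).factorial : ℚ_[p])⁻¹) *
      ((k : MvPolynomial (Fin 4) ℚ_[p]) + 1) = MvPolynomial.C ((k.factorial : ℚ_[p])⁻¹) := by
    have hk : (k : ℚ_[p]) + 1 ≠ 0 := by exact_mod_cast k.succ_ne_zero
    rw [← map_natCast (MvPolynomial.C : ℚ_[p] →+* MvPolynomial (Fin 4) ℚ_[p]) k, ← map_one
      (MvPolynomial.C : ℚ_[p] →+* MvPolynomial (Fin 4) ℚ_[p]), ← map_add, ← map_mul,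
      Nat.factorial_succ, Nat.cast_mul, Nat.cast_succ, mul_inv, mul_right_comm,
      inv_mul_cancel₀ hk, one_mul]
  rw [truncExpPoly, derivative_sum_C_mul_pow (masterArg p)
    (fun k => MvPolynomial.C ((k.factorial : ℚ_[p])⁻¹)) hc]
  simp [masterArg]

theorem derivative_masterPoly (q r s : ℕ) (m' : ℤ) :
    derivative (masterPoly p q r s m') =
      C (MvPolynomial.C (p : ℚ_[p]) * (MvPolynomial.X 3 - MvPolynomial.X 2)) *
          (masterPoly p q r s m' - masterPolyTop p q r s m') +
        C ((tExp p q r s m').toNat : MvPolynomial (Fin 4) ℚ_[p]) *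
          (masterPoly1 p q r s m' + masterPoly2 p q r s m') := by
  rw [masterPoly, derivative_mul, derivative_mul, derivative_C, derivative_truncExpPoly,
    derivative_X_sub_C_mul_X_sub_C_pow, masterPoly1, masterPoly2, masterPolyTop]
  ring

theorem masterPoly1_sub_masterPoly2 (q r s : ℕ) (m : ℤ) (hz : 0 ≤ zExp p q r s (m - 1))
    (ht : 0 ≤ tExp p q r s m) :
    masterPoly1 p q r s (m - 1) - masterPoly2 p q r s (m - 1) = masterPoly p q r s m := by
  obtain ⟨A, hA⟩ := Int.eq_ofNat_of_zero_le hz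
  obtain ⟨T, hT⟩ := Int.eq_ofNat_of_zero_le ht
  have hzm : zExp p q r s m = A + 1 := by rw [← hA]; simp only [zExp]; ring
  have htm : tExp p q r s (m - 1) = T + 1 := by rw [← hT]; simp only [tExp]; ring
  simp only [masterPoly1, masterPoly2, masterPoly, hA, hzm, htm, hT]
  simp only [Int.toNat_natCast, show ((A : ℤ) + 1).toNat = A + 1 by omega,
    show ((T : ℤ) + 1).toNat = T + 1 by omega, Nat.add_sub_cancel, map_pow, map_sub, mul_pow]
  ring

theorem psiPoly_sub_one (q r s : ℕ) (m : ℤ) (hz : 0 ≤ zExp p q r s (m - 1))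
    (ht : 0 ≤ tExp p q r s m) (d : ℕ) :
    psiPoly p q r s (m - 1) d = (masterPoly p q r s m).coeff (d * p ^ s - 1) := by
  rw [psiPoly, Icoef, Icoef, if_pos rfl, if_neg (by norm_num), ← coeff_sub,
    masterPoly1_sub_masterPoly2 q r s m hz ht]

theorem phiPoly_eq_coeff (q r s : ℕ) (m : ℤ) (d : ℕ) :
    phiPoly p q r s m d =
      (masterPoly1 p q r s m + masterPoly2 p q r s m).coeff (d * p ^ s - 1) := by
  rw [phiPoly, Icoef, Icoef, if_pos rfl, if_neg (by norm_num), coeff_add]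

theorem exists_C_mul_masterPoly_sub_eq_derivative_add (hodd : p ≠ 2) {q : ℕ}
    (hpq : p ≡ 1 [MOD q]) (r s : ℕ) (m : ℤ) (ht : 0 ≤ tExp p q r s m) :
    ∃ R ∈ liftsRing (mvPolyPadicIntMap p (Fin 4)),
      C (MvPolynomial.C (p : ℚ_[p]) * (MvPolynomial.X 3 - MvPolynomial.X 2)) *
          masterPoly p q r s m -
        C (MvPolynomial.C ((r : ℚ_[p]) / q + m)) *
          (masterPoly1 p q r s m + masterPoly2 p q r s m) =
      derivative (masterPoly p q r s m) + C (MvPolynomial.C ((p : ℚ_[p]) ^ s)) * R := by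
  obtain ⟨R, hR, hRtop⟩ := exists_C_mul_masterPolyTop_eq hodd q r s m
  have hrq : ‖(r : ℚ_[p]) / q‖ ≤ 1 := by
    rw [norm_div, norm_natCast_eq_one_of_modEq_one hpq, div_one]
    exact IsUltrametricDist.norm_natCast_le_one ℚ_[p] r
  refine ⟨C (MvPolynomial.X 3 - MvPolynomial.X 2) * R -
      C (MvPolynomial.C ((r : ℚ_[p]) / q)) * (masterPoly1 p q r s m + masterPoly2 p q r s m),
    sub_mem (mul_mem (C_mem_liftsRing (sub_mem (mvPolynomial_X_mem_range 3)
      (mvPolynomial_X_mem_range 2))) hR) (mul_mem (C_mem_liftsRing (mvPolynomial_C_mem_range hrq))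
        (add_mem (masterPoly1_mem q r s m) (masterPoly2_mem q r s m))), ?_⟩
  have hT : ((tExp p q r s m).toNat : MvPolynomial (Fin 4) ℚ_[p]) =
      MvPolynomial.C ((r : ℚ_[p]) / q) * MvPolynomial.C ((p : ℚ_[p]) ^ s) -
        MvPolynomial.C ((r : ℚ_[p]) / q + m) := by
    rw [← map_mul, ← tExp_add_div_add r hpq s m, ← map_sub, add_sub_cancel_right,
      ← Int.cast_natCast, Int.toNat_of_nonneg ht, map_intCast]
  rw [derivative_masterPoly, hT]
  simp only [map_mul, map_sub]
  linear_combination (C (MvPolynomial.X 3) - C (MvPolynomial.X 2)) * hRtop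

end MasterPolynomial

end

theorem psi_proportional_phi_general
    (p q r k s : ℕ) [Fact p.Prime] (hodd : p ≠ 2)
    (hp : p = k * q + 1) (m : ℤ)
    (hpos₂ : 0 < tExp p q r s m)
    (hpos₁' : 0 < zExp p q r s (m - 1))
    (d : ℕ) (hd : 0 < d) :
    CongMod p s
      ((MvPolynomial.X 3 - MvPolynomial.X 2) * MvPolynomial.C (p : ℚ_[p]) *
        psiPoly p q r s (m - 1) d)
      (MvPolynomial.C ((r : ℚ_[p]) / (q : ℚ_[p]) + (m : ℚ_[p])) * phiPoly p q r s m d) := by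
  have hpq : p ≡ 1 [MOD q] := by simp [hp, Nat.ModEq]
  have hN : d * p ^ s ≠ 0 := (Nat.mul_pos hd (pow_pos (Fact.out : p.Prime).pos s)).ne'
  obtain ⟨R, hR, hid⟩ := exists_C_mul_masterPoly_sub_eq_derivative_add hodd hpq r s m hpos₂.le
  have hcoeff := congrArg (coeff · (d * p ^ s - 1)) hid
  simp only [coeff_sub, coeff_add, coeff_C_mul, coeff_derivative_sub_one _ hN] at hcoeff
  refine congMod_of_sub_eq_C_mul (R := MvPolynomial.C (d : ℚ_[p]) *
      (masterPoly p q r s m).coeff (d * p ^ s) + R.coeff (d * p ^ s - 1))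
    (add_mem (mul_mem (mvPolynomial_C_mem_range (IsUltrametricDist.norm_natCast_le_one _ d))
      (coeff_mem_range_of_mem_liftsRing (masterPoly_mem q r s m) _))
      (coeff_mem_range_of_mem_liftsRing hR _)) ?_
  rw [psiPoly_sub_one q r s m hpos₁'.le hpos₂.le, phiPoly_eq_coeff]
  simp only [coeff_add, map_natCast, map_pow, Nat.cast_mul, Nat.cast_pow] at hcoeff ⊢
  linear_combination hcoeff

/-- **Proportionality of the two eigenfunctions (Theorem 3.3).** Under the standing
assumptions, with the positivity conditions holding for both `m` and `m−1`, for every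
positive integer `d` one has the congruence
`(λ₂−λ₁)·p·ψ_{s,d}(z,λ,κ−1) ≡ κ·φ_{s,d}(z,λ,κ) (mod p^s)`, where `κ = r/q + m ∈ ℤ_p`. -/
theorem psi_proportional_phi
    (p q r k s : ℕ) [Fact p.Prime] (hodd : p ≠ 2)
    (hcop : Nat.Coprime r q) (hhalf : q < 2 * r) (hlt : r < q)
    (hk : 0 < k) (hp : p = k * q + 1) (hs : 0 < s) (m : ℤ)
    (hpos₁ : 0 < zExp p q r s m) (hpos₂ : 0 < tExp p q r s m)
    (hpos₁' : 0 < zExp p q r s (m - 1)) (hpos₂' : 0 < tExp p q r s (m - 1))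
    (d : ℕ) (hd : 0 < d) :
    CongMod p s
      ((MvPolynomial.X 3 - MvPolynomial.X 2) * MvPolynomial.C (p : ℚ_[p]) *
        psiPoly p q r s (m - 1) d)
      (MvPolynomial.C ((r : ℚ_[p]) / (q : ℚ_[p]) + (m : ℚ_[p])) * phiPoly p q r s m d) :=
  psi_proportional_phi_general p q r k s hodd hp m hpos₂ hpos₁' d hd
end

section
/- (Shift operator modulo p^s) Let r, q be coprime positive integers with 1/2 < r/q < 1, m an integer, κ = r/q + m, p = kq+1 an odd prime, and s a positive integer such that the positivity conditions p^s + (1−p^s)r/q + m' > 0 and (p^s−1)r/q − m' > 0 hold for all m' ∈ {m−1, m, m+1}. Then for every positive integer d, the following congruence of polynomials holds in ℤ_p[z_1,z_2,λ_1,λ_2] modulo p^s: (z_1−z_2)·(∂_1−∂_2) ψ_{s,d}(z,λ,κ−1) − 2κ·ψ_{s,d}(z,λ,κ−1) ≡ κ·(z_1−z_2)·ψ_{s,d}(z,λ,κ) (mod p^s), i.e. D_κ ψ_{s,d}(z,λ,κ−1) ≡ κ ψ_{s,d}(z,λ,κ) (mod p^s) after clearing the denominator of the shift operator D_κ = ∂_1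 − ∂_2 − 2κ/(z_1−z_2); here κ = r/q + m ∈ ℤ_p and ∂_i is the formal partial derivative with respect to z_i. -/
open Finset Polynomial

namespace ShiftAux

variable {p : ℕ} [Fact p.Prime]

abbrev Rp (p : ℕ) [Fact p.Prime] := MvPolynomial (Fin 4) ℚ_[p]

/-- The derivation `∂₁ - ∂₂`. -/
noncomputable def Dp (p : ℕ) [Fact p.Prime] : Derivation ℚ_[p] (Rp p) (Rp p) :=
  MvPolynomial.pderiv 0 - MvPolynomial.pderiv 1

lemma Dp_apply (f : Rp p) :
    Dp p f = MvPolynomial.pderiv 0 f - MvPolynomial.pderiv 1 f := by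
  simp [Dp, Derivation.sub_apply]

/-- Coefficientwise extension of `Dp` to `t`-polynomials. -/
noncomputable def Dext (P : Polynomial (Rp p)) : Polynomial (Rp p) :=
  ⟨AddMonoidAlgebra.ofCoeff (P.toFinsupp.coeff.mapRange (Dp p) (map_zero _))⟩

lemma coeff_Dext (P : Polynomial (Rp p)) (n : ℕ) :
    (Dext P).coeff n = Dp p (P.coeff n) := by
  rcases P with ⟨f⟩
  simp [Dext, Polynomial.coeff_ofFinsupp, Finsupp.mapRange_apply, Polynomial.coeff]

lemma Dext_add (P Q : Polynomial (Rp p)) : Dext (P + Q) = Dext P + Dext Q := by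
  ext n; simp [coeff_Dext, Polynomial.coeff_add]

lemma Dext_zero : Dext (0 : Polynomial (Rp p)) = 0 := by
  ext n; simp [coeff_Dext]

lemma Dext_C (a : Rp p) : Dext (Polynomial.C a) = Polynomial.C (Dp p a) := by
  ext n
  simp only [coeff_Dext, Polynomial.coeff_C]
  split <;> simp

lemma Dext_X : Dext (Polynomial.X : Polynomial (Rp p)) = 0 := by
  ext n
  simp only [coeff_Dext, Polynomial.coeff_X, Polynomial.coeff_zero]
  split <;> simp

lemma Dext_mul (P Q : Polynomial (Rp p)) :
    Dext (P * Q) = Dext P * Q + P * Dext Q := by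
  refine Polynomial.ext fun n => ?_
  rw [coeff_Dext, Polynomial.coeff_add, Polynomial.coeff_mul, Polynomial.coeff_mul,
    Polynomial.coeff_mul, map_sum]
  rw [← Finset.sum_add_distrib]
  refine Finset.sum_congr rfl fun x _ => ?_
  rw [Derivation.leibniz]
  simp [coeff_Dext, smul_eq_mul]
  ring

lemma Dext_sub (P Q : Polynomial (Rp p)) : Dext (P - Q) = Dext P - Dext Q := by
  ext n; simp [coeff_Dext, Polynomial.coeff_sub]

lemma Dext_pow_succ (P : Polynomial (Rp p)) (n : ℕ) :
    Dext (P ^ (n + 1)) = ((n : Polynomial (Rp p)) + 1) * P ^ n * Dext P := by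
  induction n with
  | zero => simp [Dext_mul]
  | succ n ih =>
    rw [pow_succ, Dext_mul, ih]
    push_cast
    ring

end ShiftAux

namespace ShiftAux

variable {p : ℕ} [Fact p.Prime]

/-- norm of a finite sum is ≤ 1 if all terms are (ultrametric). -/
lemma norm_sum_le_one {ι : Type*} (s : Finset ι) (f : ι → ℚ_[p])
    (h : ∀ i ∈ s, ‖f i‖ ≤ 1) : ‖∑ i ∈ s, f i‖ ≤ 1 := by
  classical
  induction s using Finset.induction with
  | empty => simp
  | @insert a t hx ih =>
    rw [Finset.sum_insert hx]
    refine le_trans (Padic.nonarchimedean _ _) ?_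
    exact max_le (h a (Finset.mem_insert_self a t))
      (ih fun i hi => h i (Finset.mem_insert_of_mem hi))

/-- All coefficients have norm at most 1. -/
def IntR (f : Rp p) : Prop := ∀ μ : Fin 4 →₀ ℕ, ‖MvPolynomial.coeff μ f‖ ≤ 1

lemma IntR_C {x : ℚ_[p]} (h : ‖x‖ ≤ 1) : IntR (MvPolynomial.C x : Rp p) := by
  intro μ
  rw [MvPolynomial.coeff_C]
  split <;> simp_all
lemma IntR_X (i : Fin 4) : IntR (MvPolynomial.X i : Rp p) := by
  intro μ
  rw [MvPolynomial.coeff_X']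
  split <;> simp
lemma IntR_add {f g : Rp p} (hf : IntR f) (hg : IntR g) : IntR (f + g) := by
  intro μ
  rw [MvPolynomial.coeff_add]
  exact le_trans (Padic.nonarchimedean _ _) (max_le (hf μ) (hg μ))
lemma IntR_neg {f : Rp p} (hf : IntR f) : IntR (-f) := by
  intro μ; rw [MvPolynomial.coeff_neg, norm_neg]; exact hf μ
lemma IntR_sub {f g : Rp p} (hf : IntR f) (hg : IntR g) : IntR (f - g) := by
  rw [sub_eq_add_neg]; exact IntR_add hf (IntR_neg hg)
lemma IntR_mul {f g : Rp p} (hf : IntR f) (hg : IntR g) : IntR (f * g) := by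
  intro μ
  rw [MvPolynomial.coeff_mul]
  refine norm_sum_le_one _ _ fun x _ => ?_
  rw [Padic.padicNormE.mul]
  exact mul_le_one₀ (hf _) (norm_nonneg _) (hg _)
lemma IntR_one : IntR (1 : Rp p) := by
  simpa using IntR_C (x := 1) (by simp)
lemma IntR_pow {f : Rp p} (hf : IntR f) (n : ℕ) : IntR (f ^ n) := by
  induction n with
  | zero => simpa using IntR_one
  | succ n ih => rw [pow_succ]; exact IntR_mul ih hf
lemma IntR_sum {ι : Type*} (s : Finset ι) (f : ι → Rp p)
    (h : ∀ i ∈ s, IntR (f i)) : IntR (∑ i ∈ s, f i) := by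
  intro μ
  rw [MvPolynomial.coeff_sum]
  exact norm_sum_le_one _ _ fun i hi => h i hi μ

/-- All `t`-coefficients are integral. -/
def IntP (P : Polynomial (Rp p)) : Prop := ∀ n : ℕ, IntR (P.coeff n)

lemma IntP_C {f : Rp p} (hf : IntR f) : IntP (Polynomial.C f) := by
  intro n
  rw [Polynomial.coeff_C]
  split
  · exact hf
  · intro μ; simp
lemma IntP_X : IntP (Polynomial.X : Polynomial (Rp p)) := by
  intro n
  rw [Polynomial.coeff_X]
  split
  · exact IntR_one
  · intro μ; simp
lemma IntP_add {P Q : Polynomial (Rp p)} (hP : IntP P) (hQ : IntP Q) : IntP (P + Q) := by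
  intro n; rw [Polynomial.coeff_add]; exact IntR_add (hP n) (hQ n)
lemma IntP_sub {P Q : Polynomial (Rp p)} (hP : IntP P) (hQ : IntP Q) : IntP (P - Q) := by
  intro n; rw [Polynomial.coeff_sub]; exact IntR_sub (hP n) (hQ n)
lemma IntP_mul {P Q : Polynomial (Rp p)} (hP : IntP P) (hQ : IntP Q) : IntP (P * Q) := by
  intro n
  rw [Polynomial.coeff_mul]
  exact IntR_sum _ _ fun x _ => IntR_mul (hP _) (hQ _)
lemma IntP_pow {P : Polynomial (Rp p)} (hP : IntP P) (n : ℕ) : IntP (P ^ n) := by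
  induction n with
  | zero =>
    intro n
    rw [pow_zero, ← Polynomial.C_1]
    exact IntP_C IntR_one n
  | succ n ih => rw [pow_succ]; exact IntP_mul ih hP
lemma IntP_sum {ι : Type*} (s : Finset ι) (f : ι → Polynomial (Rp p))
    (h : ∀ i ∈ s, IntP (f i)) : IntP (∑ i ∈ s, f i) := by
  intro n
  rw [Polynomial.finset_sum_coeff]
  exact IntR_sum _ _ fun i hi => h i hi n

/-- The key norm estimate for coefficients of the truncated exponential. -/
lemma norm_pPow_mul_invFactorial_le (k : ℕ) :
    ‖((k.factorial : ℚ_[p]))⁻¹ * (p : ℚ_[p]) ^ k‖ ≤ 1 := by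
  have hp := (Fact.out : p.Prime)
  have hfac : ((k.factorial : ℚ_[p])) ≠ 0 := by
    exact_mod_cast Nat.cast_ne_zero.mpr k.factorial_ne_zero
  have hval : ‖(k.factorial : ℚ_[p])‖ = (p : ℝ) ^ (-(padicValNat p k.factorial : ℤ)) := by
    rw [Padic.norm_eq_zpow_neg_valuation hfac, Padic.valuation_natCast]
  have hv : padicValNat p k.factorial ≤ k := by
    have h1 : (p - 1) * padicValNat p k.factorial = k - (p.digits k).sum :=
      sub_one_mul_padicValNat_factorial k
    have h2 : 1 ≤ p - 1 := by have := hp.two_le; omega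
    nlinarith [Nat.sub_le k (p.digits k).sum,
      Nat.mul_le_mul_right (padicValNat p k.factorial) h2]
  have hp0 : (p : ℝ) ≠ 0 := by exact_mod_cast hp.pos.ne'
  rw [Padic.padicNormE.mul, norm_inv, hval, Padic.norm_p_pow, ← zpow_neg, neg_neg,
    ← zpow_add₀ hp0]
  refine zpow_le_one_of_nonpos₀ (by exact_mod_cast hp.one_lt.le) ?_
  omega

end ShiftAux

namespace ShiftAux

variable {p : ℕ} [Fact p.Prime]

lemma Dp_c0 : Dp p (MvPolynomial.C (p : ℚ_[p]) * MvPolynomial.X 2 *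
    (MvPolynomial.X 0 + MvPolynomial.X 1)) = 0 := by
  rw [Dp_apply]
  simp [MvPolynomial.pderiv_mul, MvPolynomial.pderiv_C,
    MvPolynomial.pderiv_X_self, MvPolynomial.pderiv_X_of_ne,
    show (2 : Fin 4) ≠ 0 by decide, show (2 : Fin 4) ≠ 1 by decide,
    show (1 : Fin 4) ≠ 0 by decide, show (0 : Fin 4) ≠ 1 by decide]

lemma Dp_c1 : Dp p (MvPolynomial.C (p : ℚ_[p]) *
    (MvPolynomial.X 3 - MvPolynomial.X 2)) = 0 := by
  rw [Dp_apply]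
  simp [MvPolynomial.pderiv_mul, MvPolynomial.pderiv_C,
    MvPolynomial.pderiv_X_of_ne,
    show (3 : Fin 4) ≠ 0 by decide, show (3 : Fin 4) ≠ 1 by decide,
    show (2 : Fin 4) ≠ 0 by decide, show (2 : Fin 4) ≠ 1 by decide]

lemma Dp_A : Dp p (MvPolynomial.X 0 - MvPolynomial.X 1) = 2 := by
  rw [Dp_apply]
  simp [MvPolynomial.pderiv_X_self, MvPolynomial.pderiv_X_of_ne,
    show (1 : Fin 4) ≠ 0 by decide, show (0 : Fin 4) ≠ 1 by decide]
  ring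

lemma Dext_masterArg : Dext (masterArg p) = 0 := by
  unfold masterArg
  rw [Dext_add, Dext_mul, Dext_C, Dext_C, Dext_X, Dp_c0, Dp_c1]
  simp

lemma Dext_sum {ι : Type*} (s : Finset ι) (f : ι → Polynomial (Rp p)) :
    Dext (∑ i ∈ s, f i) = ∑ i ∈ s, Dext (f i) := by
  classical
  induction s using Finset.induction with
  | empty => simpa using Dext_zero
  | @insert a t hx ih => rw [Finset.sum_insert hx, Finset.sum_insert hx, Dext_add, ih]

lemma Dext_truncExp (s : ℕ) : Dext (truncExpPoly p s) = 0 := by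
  unfold truncExpPoly
  rw [Dext_sum]
  refine Finset.sum_eq_zero fun k _ => ?_
  rw [Dext_mul, Dext_C]
  have h1 : Dp p (MvPolynomial.C ((k.factorial : ℚ_[p])⁻¹)) = 0 := by
    rw [Dp_apply]; simp [MvPolynomial.pderiv_C]
  have h2 : Dext (masterArg p ^ k) = 0 := by
    cases k with
    | zero =>
      rw [pow_zero, ← Polynomial.C_1, Dext_C]
      rw [Dp_apply]; simp [MvPolynomial.pderiv_C]
    | succ n => rw [Dext_pow_succ, Dext_masterArg]; ring
  rw [h1, h2]
  simp

end ShiftAux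

namespace ShiftAux

variable {p : ℕ} [Fact p.Prime]

/-- The integral part of the exponential argument. -/
noncomputable def argI (p : ℕ) [Fact p.Prime] : Polynomial (Rp p) :=
  Polynomial.C (MvPolynomial.X 2 * (MvPolynomial.X 0 + MvPolynomial.X 1)) +
    Polynomial.C (MvPolynomial.X 3 - MvPolynomial.X 2) * Polynomial.X

lemma masterArg_split :
    masterArg p = Polynomial.C (MvPolynomial.C (p : ℚ_[p])) * argI p := by
  unfold masterArg argI
  simp only [map_mul, map_add, map_sub]
  ring

lemma IntP_argI : IntP (argI p) :=
  IntP_add (IntP_C (IntR_mul (IntR_X 2) (IntR_add (IntR_X 0) (IntR_X 1))))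
    (IntP_mul (IntP_C (IntR_sub (IntR_X 3) (IntR_X 2))) IntP_X)

lemma IntP_truncExp (s : ℕ) : IntP (truncExpPoly p s) := by
  unfold truncExpPoly
  refine IntP_sum _ _ fun k _ => ?_
  have h : Polynomial.C (MvPolynomial.C ((k.factorial : ℚ_[p])⁻¹)) * masterArg p ^ k =
      Polynomial.C (MvPolynomial.C ((k.factorial : ℚ_[p])⁻¹ * (p : ℚ_[p]) ^ k)) *
        argI p ^ k := by
    rw [masterArg_split, mul_pow, ← map_pow, ← map_pow, ← mul_assoc, ← map_mul, ← map_mul]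
  rw [h]
  exact IntP_mul (IntP_C (IntR_C (norm_pPow_mul_invFactorial_le k))) (IntP_pow IntP_argI k)

lemma IntP_master1 (q r s : ℕ) (m' : ℤ) : IntP (masterPoly1 p q r s m') := by
  unfold masterPoly1
  exact IntP_mul (IntP_mul (IntP_mul (IntP_truncExp s)
    (IntP_C (IntR_pow (IntR_sub (IntR_X 0) (IntR_X 1)) _)))
    (IntP_pow (IntP_sub IntP_X (IntP_C (IntR_X 0))) _))
    (IntP_pow (IntP_sub IntP_X (IntP_C (IntR_X 1))) _)

lemma IntP_master2 (q r s : ℕ) (m' : ℤ) : IntP (masterPoly2 p q r s m') := by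
  unfold masterPoly2
  exact IntP_mul (IntP_mul (IntP_mul (IntP_truncExp s)
    (IntP_C (IntR_pow (IntR_sub (IntR_X 0) (IntR_X 1)) _)))
    (IntP_pow (IntP_sub IntP_X (IntP_C (IntR_X 0))) _))
    (IntP_pow (IntP_sub IntP_X (IntP_C (IntR_X 1))) _)

lemma psiPoly_eq (q r s : ℕ) (m' : ℤ) (d : ℕ) :
    psiPoly p q r s m' d =
      (masterPoly1 p q r s m' - masterPoly2 p q r s m').coeff (d * p ^ s - 1) := by
  simp [psiPoly, Icoef, Polynomial.coeff_sub]

lemma psiPoly_eq' (q r s : ℕ) (m' : ℤ) (d : ℕ) :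
    psiPoly p q r s m' d =
      (masterPoly1 p q r s m').coeff (d * p ^ s - 1) -
        (masterPoly2 p q r s m').coeff (d * p ^ s - 1) := by
  simp [psiPoly, Icoef]

lemma IntR_psi (q r s : ℕ) (m' : ℤ) (d : ℕ) : IntR (psiPoly p q r s m' d) := by
  rw [psiPoly_eq]
  rw [Polynomial.coeff_sub]
  exact IntR_sub (IntP_master1 q r s m' _) (IntP_master2 q r s m' _)

end ShiftAux

namespace ShiftAux

variable {p : ℕ} [Fact p.Prime]

lemma Dp_X0 : Dp p (MvPolynomial.X 0) = 1 := by
  rw [Dp_apply]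
  simp [MvPolynomial.pderiv_X_self, MvPolynomial.pderiv_X_of_ne
    (show (0 : Fin 4) ≠ 1 by decide)]

lemma Dp_X1 : Dp p (MvPolynomial.X 1) = -1 := by
  rw [Dp_apply]
  simp [MvPolynomial.pderiv_X_self, MvPolynomial.pderiv_X_of_ne
    (show (1 : Fin 4) ≠ 0 by decide)]

lemma Dext_U :
    Dext (Polynomial.X - Polynomial.C (MvPolynomial.X 0) : Polynomial (Rp p)) = -1 := by
  rw [Dext_sub, Dext_X, Dext_C, Dp_X0]
  simp

lemma Dext_V :
    Dext (Polynomial.X - Polynomial.C (MvPolynomial.X 1) : Polynomial (Rp p)) = 1 := by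
  rw [Dext_sub, Dext_X, Dext_C, Dp_X1]
  simp

lemma star (q r s : ℕ) (m : ℤ) (a b' : ℕ)
    (hza : (zExp p q r s (m-1)).toNat = a + 1)
    (hzm : (zExp p q r s m).toNat = a + 2)
    (htb : (tExp p q r s (m-1)).toNat = b' + 2)
    (htm : (tExp p q r s m).toNat = b' + 1) :
    Polynomial.C (MvPolynomial.X 0 - MvPolynomial.X 1) *
        Dext (masterPoly1 p q r s (m-1) - masterPoly2 p q r s (m-1)) =
      ((2*a+4 : ℕ) : Polynomial (Rp p)) *
          (masterPoly1 p q r s (m-1) - masterPoly2 p q r s (m-1))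
        - ((b'+1 : ℕ) : Polynomial (Rp p)) *
          (Polynomial.C (MvPolynomial.X 0 - MvPolynomial.X 1) *
            (masterPoly1 p q r s m - masterPoly2 p q r s m)) := by
  have hCA : (Polynomial.C (MvPolynomial.X 0 - MvPolynomial.X 1) : Polynomial (Rp p)) =
      (Polynomial.X - Polynomial.C (MvPolynomial.X 1)) -
        (Polynomial.X - Polynomial.C (MvPolynomial.X 0)) := by
    rw [map_sub]; ring
  have hDVU : Dext ((Polynomial.X - Polynomial.C (MvPolynomial.X 1)) -
      (Polynomial.X - Polynomial.C (MvPolynomial.X 0)) : Polynomial (Rp p)) = 2 := by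
    rw [Dext_sub, Dext_U, Dext_V]; norm_num
  have fac1 : masterPoly1 p q r s (m-1) - masterPoly2 p q r s (m-1) =
      truncExpPoly p s *
        ((Polynomial.X - Polynomial.C (MvPolynomial.X 1)) -
          (Polynomial.X - Polynomial.C (MvPolynomial.X 0))) ^ (a+2) *
        (Polynomial.X - Polynomial.C (MvPolynomial.X 0)) ^ (b'+1) *
        (Polynomial.X - Polynomial.C (MvPolynomial.X 1)) ^ (b'+1) := by
    unfold masterPoly1 masterPoly2
    rw [hza, htb]
    simp only [map_pow, hCA]
    rw [show b' + 2 - 1 = b' + 1 from rfl]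
    ring
  have fac2 : masterPoly1 p q r s m - masterPoly2 p q r s m =
      truncExpPoly p s *
        ((Polynomial.X - Polynomial.C (MvPolynomial.X 1)) -
          (Polynomial.X - Polynomial.C (MvPolynomial.X 0))) ^ (a+3) *
        (Polynomial.X - Polynomial.C (MvPolynomial.X 0)) ^ b' *
        (Polynomial.X - Polynomial.C (MvPolynomial.X 1)) ^ b' := by
    unfold masterPoly1 masterPoly2
    rw [hzm, htm]
    simp only [map_pow, hCA]
    rw [show b' + 1 - 1 = b' from rfl]
    ring
  rw [fac1, fac2, Dext_mul, Dext_mul, Dext_mul, Dext_truncExp,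
    show a + 2 = (a+1) + 1 from rfl, Dext_pow_succ, Dext_pow_succ, Dext_pow_succ,
    hDVU, Dext_U, Dext_V, hCA]
  push_cast
  ring

end ShiftAux

namespace ShiftAux

variable {p : ℕ} [Fact p.Prime]

lemma star_coeff (q r s : ℕ) (m : ℤ) (a b' : ℕ) (d : ℕ)
    (hza : (zExp p q r s (m-1)).toNat = a + 1)
    (hzm : (zExp p q r s m).toNat = a + 2)
    (htb : (tExp p q r s (m-1)).toNat = b' + 2)
    (htm : (tExp p q r s m).toNat = b' + 1) :
    (MvPolynomial.X 0 - MvPolynomial.X 1) *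
        (MvPolynomial.pderiv 0 (psiPoly p q r s (m-1) d) -
          MvPolynomial.pderiv 1 (psiPoly p q r s (m-1) d)) =
      MvPolynomial.C ((2*a+4 : ℕ) : ℚ_[p]) * psiPoly p q r s (m-1) d -
        MvPolynomial.C ((b'+1 : ℕ) : ℚ_[p]) *
          ((MvPolynomial.X 0 - MvPolynomial.X 1) * psiPoly p q r s m d) := by
  have h := congrArg (fun P : Polynomial (Rp p) => Polynomial.coeff P (d * p ^ s - 1))
    (star q r s m a b' hza hzm htb htm)
  simp only [← Polynomial.C_eq_natCast, Polynomial.coeff_sub, Polynomial.coeff_C_mul,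
    coeff_Dext] at h
  rw [← psiPoly_eq', ← psiPoly_eq', Dp_apply] at h
  simp only [map_natCast]
  linear_combination h

end ShiftAux


set_option maxHeartbeats 2000000 in
/-- **Shift operator modulo `p^s` (Theorem 3.4).** Under the standing assumptions, with
the positivity conditions holding for `m' ∈ {m−1, m, m+1}`, for every positive integer
`d` the congruence `D_κ ψ_{s,d}(z,λ,κ−1) ≡ κ ψ_{s,d}(z,λ,κ) (mod p^s)` holds after
clearing the denominator of the shift operator `D_κ = ∂₁ − ∂₂ − 2κ/(z₁−z₂)`:
`(z₁−z₂)(∂₁−∂₂)ψ_{s,d}(κ−1) − 2κ·ψ_{s,d}(κ−1) ≡ κ·(z₁−z₂)·ψ_{s,d}(κ) (mod p^s)`,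
where `κ = r/q + m ∈ ℤ_p`. -/
theorem shift_operator_congr
    (p q r k s : ℕ) [Fact p.Prime] (hodd : p ≠ 2)
    (hcop : Nat.Coprime r q) (hhalf : q < 2 * r) (hlt : r < q)
    (hk : 0 < k) (hp : p = k * q + 1) (hs : 0 < s) (m : ℤ)
    (hpos₁ : 0 < zExp p q r s (m - 1)) (hpos₂ : 0 < tExp p q r s (m - 1))
    (hpos₃ : 0 < zExp p q r s m) (hpos₄ : 0 < tExp p q r s m)
    (hpos₅ : 0 < zExp p q r s (m + 1)) (hpos₆ : 0 < tExp p q r s (m + 1))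
    (d : ℕ) (hd : 0 < d) :
    CongMod p s
      ((MvPolynomial.X 0 - MvPolynomial.X 1) *
          (MvPolynomial.pderiv 0 (psiPoly p q r s (m - 1) d) -
            MvPolynomial.pderiv 1 (psiPoly p q r s (m - 1) d)) -
        MvPolynomial.C (2 * ((r : ℚ_[p]) / (q : ℚ_[p]) + (m : ℚ_[p]))) *
          psiPoly p q r s (m - 1) d)
      (MvPolynomial.C ((r : ℚ_[p]) / (q : ℚ_[p]) + (m : ℚ_[p])) *
        (MvPolynomial.X 0 - MvPolynomial.X 1) * psiPoly p q r s m d) := by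
  classical
  have hprime : p.Prime := Fact.out
  -- exponent bookkeeping
  have hz1 : zExp p q r s m = zExp p q r s (m-1) + 1 := by unfold zExp; ring
  have ht1 : tExp p q r s m = tExp p q r s (m-1) - 1 := by unfold tExp; ring
  obtain ⟨a, hza⟩ : ∃ a, (zExp p q r s (m-1)).toNat = a + 1 :=
    ⟨(zExp p q r s (m-1)).toNat - 1, by omega⟩
  have hzm : (zExp p q r s m).toNat = a + 2 := by omega
  obtain ⟨b', htb⟩ : ∃ b', (tExp p q r s (m-1)).toNat = b' + 2 :=
    ⟨(tExp p q r s (m-1)).toNat - 2, by omega⟩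
  have htm : (tExp p q r s m).toNat = b' + 1 := by omega
  have key := ShiftAux.star_coeff q r s m a b' d hza hzm htb htm
  -- divisibility facts
  have hq1 : 1 ≤ q := by omega
  have hq0 : (q : ℤ) ≠ 0 := by exact_mod_cast Nat.one_le_iff_ne_zero.mp hq1
  have hdvdps : (q:ℤ) ∣ (p:ℤ)^s - 1 := by
    have h1 : (q:ℤ) ∣ (p:ℤ) - 1 := ⟨k, by rw [hp]; push_cast; ring⟩
    exact h1.trans (by simpa using sub_dvd_pow_sub_pow (p:ℤ) 1 s)
  obtain ⟨c0, hc0⟩ := hdvdps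
  have hdvd1 : ((q:ℤ) - r) * (p:ℤ)^s + r = (q:ℤ) * (((q:ℤ)-r) * c0 + 1) := by
    linear_combination ((q:ℤ)-r) * hc0
  have hdvd2 : (r:ℤ) * ((p:ℤ)^s - 1) = (q:ℤ) * ((r:ℤ) * c0) := by
    linear_combination (r:ℤ) * hc0
  set c1 : ℤ := ((q:ℤ)-r) * c0 + 1 with hc1def
  set c2 : ℤ := (r:ℤ) * c0 with hc2def
  have hz0 : zExp p q r s (m-1) = c1 + (m - 1) := by
    unfold zExp; rw [hdvd1, Int.mul_ediv_cancel_left _ hq0]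
  have ht0 : tExp p q r s (m-1) = c2 - (m - 1) := by
    unfold tExp; rw [hdvd2, Int.mul_ediv_cancel_left _ hq0]
  have haz : (a : ℤ) = c1 + m - 2 := by omega
  have hbz : (b' : ℤ) = c2 - m - 1 := by omega
  -- p-adic norms of the scalars
  have hqnorm : ‖((q:ℤ) : ℚ_[p])‖ = 1 := by
    have hle := Padic.norm_int_le_one (p := p) (q:ℤ)
    have hnd : ¬ ((p:ℤ) ∣ (q:ℤ)) := by
      intro hdvd
      have : p ∣ q := Int.ofNat_dvd.mp hdvd
      have := Nat.le_of_dvd (by omega) this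
      nlinarith
    have hnlt : ¬ ‖((q:ℤ) : ℚ_[p])‖ < 1 := fun h =>
      hnd ((Padic.norm_intCast_lt_one_iff (k := (q:ℤ))).mp h)
    linarith
  have hqne : ((q:ℕ) : ℚ_[p]) ≠ 0 := by
    intro h0
    rw [show ((q:ℤ) : ℚ_[p]) = ((q:ℕ) : ℚ_[p]) by push_cast; ring, h0] at hqnorm
    simp at hqnorm
  -- scalar identities
  have hc1q : ((q:ℚ_[p]) - r) * (p:ℚ_[p])^s + r = (q:ℚ_[p]) * (c1 : ℚ_[p]) := by
    exact_mod_cast congrArg (fun x : ℤ => (x : ℚ_[p])) hdvd1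
  have hc2q : (r:ℚ_[p]) * ((p:ℚ_[p])^s - 1) = (q:ℚ_[p]) * (c2 : ℚ_[p]) := by
    exact_mod_cast congrArg (fun x : ℤ => (x : ℚ_[p])) hdvd2
  have haq : ((a:ℕ) : ℚ_[p]) = (c1 : ℚ_[p]) + (m : ℚ_[p]) - 2 := by
    exact_mod_cast congrArg (fun x : ℤ => (x : ℚ_[p])) haz
  have hbq : ((b':ℕ) : ℚ_[p]) = (c2 : ℚ_[p]) - (m : ℚ_[p]) - 1 := by
    exact_mod_cast congrArg (fun x : ℤ => (x : ℚ_[p])) hbz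
  have hval1 : ((2*a+4 : ℕ) : ℚ_[p]) - 2 * ((r : ℚ_[p]) / (q : ℚ_[p]) + (m : ℚ_[p]))
      = ((2*((q:ℤ)-r) : ℤ) : ℚ_[p]) * (p:ℚ_[p])^s / (q:ℚ_[p]) := by
    push_cast
    rw [haq]
    field_simp
    linear_combination -2 * hc1q
  have hval2 : ((b'+1 : ℕ) : ℚ_[p]) + ((r : ℚ_[p]) / (q : ℚ_[p]) + (m : ℚ_[p]))
      = ((r : ℤ) : ℚ_[p]) * (p:ℚ_[p])^s / (q:ℚ_[p]) := by
    push_cast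
    rw [hbq]
    field_simp
    linear_combination -hc2q
  have normbound : ∀ w : ℤ, ‖((w : ℚ_[p]) * (p:ℚ_[p])^s / (q:ℚ_[p]))‖ ≤ (p:ℝ)^(-(s:ℤ)) := by
    intro w
    rw [show ((q:ℕ) : ℚ_[p]) = ((q:ℤ) : ℚ_[p]) by push_cast; ring, norm_div, norm_mul,
      hqnorm, div_one, Padic.norm_p_pow]
    have h1 := Padic.norm_int_le_one (p := p) w
    have h2 : (0:ℝ) < (p:ℝ)^(-(s:ℤ)) := by
      apply zpow_pos
      exact_mod_cast hprime.pos
    nlinarith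
  have hnorm1 : ‖((2*a+4 : ℕ) : ℚ_[p]) -
      2 * ((r : ℚ_[p]) / (q : ℚ_[p]) + (m : ℚ_[p]))‖ ≤ (p:ℝ)^(-(s:ℤ)) := by
    rw [hval1]; exact normbound _
  have hnorm2 : ‖((b'+1 : ℕ) : ℚ_[p]) +
      ((r : ℚ_[p]) / (q : ℚ_[p]) + (m : ℚ_[p]))‖ ≤ (p:ℝ)^(-(s:ℤ)) := by
    rw [hval2]; exact normbound _
  -- assembly
  intro μ
  have hLR : ((MvPolynomial.X 0 - MvPolynomial.X 1) *
          (MvPolynomial.pderiv 0 (psiPoly p q r s (m - 1) d) -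
            MvPolynomial.pderiv 1 (psiPoly p q r s (m - 1) d)) -
        MvPolynomial.C (2 * ((r : ℚ_[p]) / (q : ℚ_[p]) + (m : ℚ_[p]))) *
          psiPoly p q r s (m - 1) d) -
      (MvPolynomial.C ((r : ℚ_[p]) / (q : ℚ_[p]) + (m : ℚ_[p])) *
        (MvPolynomial.X 0 - MvPolynomial.X 1) * psiPoly p q r s m d)
      = MvPolynomial.C (((2*a+4 : ℕ) : ℚ_[p]) -
            2 * ((r : ℚ_[p]) / (q : ℚ_[p]) + (m : ℚ_[p]))) * psiPoly p q r s (m-1) d -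
        MvPolynomial.C (((b'+1 : ℕ) : ℚ_[p]) +
            ((r : ℚ_[p]) / (q : ℚ_[p]) + (m : ℚ_[p]))) *
          ((MvPolynomial.X 0 - MvPolynomial.X 1) * psiPoly p q r s m d) := by
    simp only [map_add, map_sub, map_mul, map_natCast, map_ofNat] at key ⊢
    linear_combination key
  rw [hLR, MvPolynomial.coeff_sub, MvPolynomial.coeff_C_mul, MvPolynomial.coeff_C_mul]
  have tri : ∀ x y : ℚ_[p], ‖x - y‖ ≤ max ‖x‖ ‖y‖ := fun x y => by
    simpa [sub_eq_add_neg] using Padic.nonarchimedean x (-y)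
  refine le_trans (tri _ _) (max_le ?_ ?_)
  · rw [norm_mul]
    calc ‖_‖ * ‖MvPolynomial.coeff μ (psiPoly p q r s (m-1) d)‖
        ≤ (p:ℝ)^(-(s:ℤ)) * 1 := by
          apply mul_le_mul hnorm1 (ShiftAux.IntR_psi q r s (m-1) d μ) (norm_nonneg _)
          positivity
      _ = (p:ℝ)^(-(s:ℤ)) := mul_one _
  · rw [norm_mul]
    calc ‖_‖ * ‖MvPolynomial.coeff μ ((MvPolynomial.X 0 - MvPolynomial.X 1) *
          psiPoly p q r s m d)‖
        ≤ (p:ℝ)^(-(s:ℤ)) * 1 := by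
          apply mul_le_mul hnorm2 ?_ (norm_nonneg _) (by positivity)
          exact ShiftAux.IntR_mul (ShiftAux.IntR_sub (ShiftAux.IntR_X 0)
            (ShiftAux.IntR_X 1)) (ShiftAux.IntR_psi q r s m d) μ
      _ = (p:ℝ)^(-(s:ℤ)) := mul_one _
end

section
/- (Shift identity for the master polynomial) Let r, q be coprime positive integers with 1/2 < r/q < 1, m an integer, κ = r/q + m, p = kq+1 an odd prime, and s a positive integer such that the positivity conditions hold for both m and m+1 (i.e. p^s + (1−p^s)r/q + m+1 > 0 and (p^s−1)r/q − (m+1) > 0). Then the following congruence of polynomials holds in ℤ_p[t,z_1,z_2,λ_1,λ_2] modulo p^s: (z_1−z_2)·(∂_1−∂_2) Φ_s(t,z,λ,κ) − 2κ·Φ_s(t,z,λ,κ) ≡ κ·(z_1−z_2)·Φ_s(t,z,λ,κ+1) (mod p^s), i.e. D_κ Φ_s(t,z,λ,κ) ≡ κ Φ_s(t,z,λ,κ+1) (mod p^s) after multiplying through by (z_1−z_2), where D_κ = ∂_1 − ∂_2 − 2κ/(z_1−z_2), κ = r/q + m ∈ ℤ_p, and ∂_i is the formal partial derivative with respect to z_i.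 -/
/-!
Write `Φ_s(κ) = E · Z^a · T^b` with `Z = z₁ - z₂` and `T = (t - z₁)(t - z₂)`. The operator
`∂₁ - ∂₂` is a derivation that kills `E` (which depends on `z` only through `z₁ + z₂`), sends `Z`
to `2` and `T` to `-Z`, so `Z (∂₁ - ∂₂) Φ_s(κ) = 2a Φ_s(κ) - b Z Φ_s(κ + 1)` exactly. The
difference in the statement is therefore `2(a - κ) Φ_s(κ) - (b + κ) Z Φ_s(κ + 1)`. Both polynomials
have coefficients in `ℤ_p` because `p^k / k! ∈ ℤ_p`, while `q (a - κ) = (q - r) p^s` and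
`q (b + κ) = r p^s` with `q` a `p`-adic unit, since `p ≡ 1 (mod q)`.
-/

open Finset

noncomputable section

/-- The master polynomial
`Φ_s(t,z,λ,κ') = E_s(pλ₁(z₁+z₂)+p(λ₂−λ₁)t) · (z₁−z₂)^{p^s+(1−p^s)r/q+m'} ·
((t−z₁)(t−z₂))^{(p^s−1)r/q−m'}` for `κ' = r/q + m'`, as an element of
`ℚ_p[t,z₁,z₂,λ₁,λ₂]` with `t = X 0`, `z₁ = X 1`, `z₂ = X 2`, `λ₁ = X 3`, `λ₂ = X 4`. -/
def masterPoly5 (p : ℕ) [Fact p.Prime] (q r s : ℕ) (m' : ℤ) : MvPolynomial (Fin 5) ℚ_[p] :=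
  (∑ k ∈ Finset.range (truncDeg p s + 1),
      MvPolynomial.C ((k.factorial : ℚ_[p])⁻¹) *
        (MvPolynomial.C (p : ℚ_[p]) * MvPolynomial.X 3 *
            (MvPolynomial.X 1 + MvPolynomial.X 2) +
          MvPolynomial.C (p : ℚ_[p]) * (MvPolynomial.X 4 - MvPolynomial.X 3) *
            MvPolynomial.X 0) ^ k) *
    (MvPolynomial.X 1 - MvPolynomial.X 2) ^ (zExp p q r s m').toNat *
    ((MvPolynomial.X 0 - MvPolynomial.X 1) *
        (MvPolynomial.X 0 - MvPolynomial.X 2)) ^ (tExp p q r s m').toNat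

open MvPolynomial

theorem Derivation.mul_apply_mul_pow_mul_pow {R A : Type*} [CommRing R] [CommRing A]
    [Algebra R A] (D : Derivation R A A) {e z t : A} (he : D e = 0) (hz : D z = 2)
    (ht : D t = -z) (a b : ℕ) :
    z * D (e * z ^ a * t ^ (b + 1)) =
      2 * a * (e * z ^ a * t ^ (b + 1)) - (b + 1) * (z * (e * z ^ (a + 1) * t ^ b)) := by
  rcases a with _ | a <;>
  · simp only [Derivation.leibniz, Derivation.leibniz_pow, he, hz, ht, smul_eq_mul,
      nsmul_eq_mul, Nat.add_sub_cancel]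
    push_cast
    ring

section Padic

variable {p : ℕ} [Fact p.Prime]

lemma Padic.norm_pow_div_factorial_le_one (k : ℕ) : ‖(p : ℚ_[p]) ^ k / k.factorial‖ ≤ 1 := by
  have hfac : (k.factorial : ℚ_[p]) ≠ 0 := by exact_mod_cast k.factorial_ne_zero
  have hp : (1 : ℝ) ≤ p := by exact_mod_cast (Fact.out : p.Prime).one_le
  rw [norm_div, Padic.norm_p_pow, Padic.norm_eq_zpow_neg_valuation hfac, Padic.valuation_natCast,
    ← zpow_sub₀ (by positivity)]
  exact zpow_le_one_of_nonpos₀ hp (by have := padicValNat_factorial_le p k; omega)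

lemma Padic.norm_le_of_mul_eq {u x : ℚ_[p]} (hu : ‖u‖ = 1) (n : ℤ) (s : ℕ)
    (h : u * x = n * (p : ℚ_[p]) ^ s) : ‖x‖ ≤ (p : ℝ) ^ (-(s : ℤ)) := by
  have := congrArg norm h
  rw [norm_mul, hu, one_mul, norm_mul, Padic.norm_p_pow] at this
  rw [this]
  exact mul_le_of_le_one_left (by positivity) (Padic.norm_int_le_one n)

variable (p) in
def integralPolys (σ : Type*) : Subring (MvPolynomial σ ℚ_[p]) :=
  (MvPolynomial.map (PadicInt.Coe.ringHom (p := p))).range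

variable {σ : Type*}

lemma X_mem_integralPolys (i : σ) : X i ∈ integralPolys p σ := ⟨X i, map_X _ _⟩

lemma C_mem_integralPolys {c : ℚ_[p]} (hc : ‖c‖ ≤ 1) : C c ∈ integralPolys p σ :=
  ⟨C ⟨c, hc⟩, map_C _ _⟩

lemma norm_coeff_le_one_of_mem_integralPolys {P : MvPolynomial σ ℚ_[p]}
    (hP : P ∈ integralPolys p σ) (n : σ →₀ ℕ) : ‖P.coeff n‖ ≤ 1 := by
  obtain ⟨P₀, rfl⟩ := hP
  rw [coeff_map]
  exact (P₀.coeff n).2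

lemma norm_coeff_C_mul_sub_C_mul_le {P Q : MvPolynomial σ ℚ_[p]} (hP : P ∈ integralPolys p σ)
    (hQ : Q ∈ integralPolys p σ) {c d : ℚ_[p]} {ε : ℝ} (hc : ‖c‖ ≤ ε) (hd : ‖d‖ ≤ ε)
    (n : σ →₀ ℕ) : ‖(C c * P - C d * Q).coeff n‖ ≤ ε := by
  have hε : 0 ≤ ε := (norm_nonneg c).trans hc
  rw [coeff_sub, coeff_C_mul, coeff_C_mul, sub_eq_add_neg]
  refine (IsUltrametricDist.norm_add_le_max _ _).trans (max_le ?_ ?_)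
  · rw [norm_mul]
    exact (mul_le_mul_of_nonneg_right hc (norm_nonneg _)).trans
      (mul_le_of_le_one_right hε (norm_coeff_le_one_of_mem_integralPolys hP n))
  · rw [norm_neg, norm_mul]
    exact (mul_le_mul_of_nonneg_right hd (norm_nonneg _)).trans
      (mul_le_of_le_one_right hε (norm_coeff_le_one_of_mem_integralPolys hQ n))

end Padic

lemma intCast_dvd_pow_sub_one {p q k : ℕ} (hp : p = k * q + 1) (s : ℕ) :
    (q : ℤ) ∣ (p : ℤ) ^ s - 1 :=
  (show (q : ℤ) ∣ p - 1 from ⟨k, by rw [hp]; push_cast; ring⟩).trans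
    (sub_one_dvd_pow_sub_one _ s)

lemma zExp_add_one (p q r s : ℕ) (m : ℤ) : zExp p q r s (m + 1) = zExp p q r s m + 1 := by
  unfold zExp; ring

lemma tExp_add_one (p q r s : ℕ) (m : ℤ) : tExp p q r s (m + 1) = tExp p q r s m - 1 := by
  unfold tExp; ring

lemma mul_zExp {p q r s : ℕ} (h : (q : ℤ) ∣ (p : ℤ) ^ s - 1) (m : ℤ) :
    q * zExp p q r s m = (q - r) * (p : ℤ) ^ s + r + q * m := by
  have hdvd : (q : ℤ) ∣ (q - r) * (p : ℤ) ^ s + r := by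
    rw [show (q - r) * (p : ℤ) ^ s + r = (q - r) * ((p : ℤ) ^ s - 1) + q by ring]
    exact dvd_add (h.mul_left _) dvd_rfl
  rw [zExp, mul_add, Int.mul_ediv_cancel' hdvd]

lemma mul_tExp {p q r s : ℕ} (h : (q : ℤ) ∣ (p : ℤ) ^ s - 1) (m : ℤ) :
    q * tExp p q r s m = r * ((p : ℤ) ^ s - 1) - q * m := by
  rw [tExp, mul_sub, Int.mul_ediv_cancel' (h.mul_left r)]

section Congruences

variable {p q k : ℕ} [Fact p.Prime] (hp : p = k * q + 1) (r s : ℕ) (m : ℤ)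
include hp

lemma Padic.norm_natCast_eq_one_of_eq_mul_add_one : ‖(q : ℚ_[p])‖ = 1 :=
  Padic.norm_natCast_eq_one_iff.2 <| by
    rw [hp, mul_comm]; exact (Nat.coprime_mul_left_add_left 1 q k).2 (Nat.coprime_one_left q)

lemma norm_zExp_sub_le : ‖(zExp p q r s m : ℚ_[p]) - (r / q + m)‖ ≤ (p : ℝ) ^ (-(s : ℤ)) := by
  have hq := Padic.norm_natCast_eq_one_of_eq_mul_add_one hp
  have hq0 : (q : ℚ_[p]) ≠ 0 := norm_ne_zero_iff.1 (by rw [hq]; exact one_ne_zero)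
  have h := congrArg (Int.cast : ℤ → ℚ_[p]) (mul_zExp (r := r) (intCast_dvd_pow_sub_one hp s) m)
  push_cast at h
  refine Padic.norm_le_of_mul_eq hq (q - r) s ?_
  rw [mul_sub, h, mul_add, mul_div_cancel₀ _ hq0]
  push_cast; ring

lemma norm_tExp_add_le : ‖(tExp p q r s m : ℚ_[p]) + (r / q + m)‖ ≤ (p : ℝ) ^ (-(s : ℤ)) := by
  have hq := Padic.norm_natCast_eq_one_of_eq_mul_add_one hp
  have hq0 : (q : ℚ_[p]) ≠ 0 := norm_ne_zero_iff.1 (by rw [hq]; exact one_ne_zero)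
  have h := congrArg (Int.cast : ℤ → ℚ_[p]) (mul_tExp (r := r) (intCast_dvd_pow_sub_one hp s) m)
  push_cast at h
  refine Padic.norm_le_of_mul_eq hq r s ?_
  rw [mul_add, h, mul_add, mul_div_cancel₀ _ hq0]
  push_cast; ring

end Congruences

section MasterPolynomial

variable (p : ℕ) [Fact p.Prime]

def truncExpFactor (s : ℕ) : MvPolynomial (Fin 5) ℚ_[p] :=
  ∑ k ∈ Finset.range (truncDeg p s + 1),
    C ((k.factorial : ℚ_[p])⁻¹) *
      (C (p : ℚ_[p]) * X 3 * (X 1 + X 2) + C (p : ℚ_[p]) * (X 4 - X 3) * X 0) ^ k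

lemma masterPoly5_eq (q r s : ℕ) (m' : ℤ) :
    masterPoly5 p q r s m' = truncExpFactor p s * (X 1 - X 2) ^ (zExp p q r s m').toNat *
      ((X 0 - X 1) * (X 0 - X 2)) ^ (tExp p q r s m').toNat := rfl

lemma truncExpFactor_mem_integralPolys (s : ℕ) :
    truncExpFactor p s ∈ integralPolys p (Fin 5) := by
  refine Subring.sum_mem _ fun k _ => ?_
  have hL : (X 3 * (X 1 + X 2) + (X 4 - X 3) * X 0 : MvPolynomial (Fin 5) ℚ_[p]) ∈
      integralPolys p (Fin 5) := by
    apply_rules [Subring.add_mem, Subring.mul_mem, Subring.sub_mem, X_mem_integralPolys]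
  rw [show (C (p : ℚ_[p]) * X 3 * (X 1 + X 2) + C (p : ℚ_[p]) * (X 4 - X 3) * X 0 :
      MvPolynomial (Fin 5) ℚ_[p]) ^ k =
      C ((p : ℚ_[p]) ^ k) * (X 3 * (X 1 + X 2) + (X 4 - X 3) * X 0) ^ k by
        rw [C_pow, ← mul_pow]; ring,
    ← mul_assoc, ← C_mul, inv_mul_eq_div]
  exact Subring.mul_mem _ (C_mem_integralPolys (Padic.norm_pow_div_factorial_le_one k))
    (Subring.pow_mem _ hL k)

lemma masterPoly5_mem_integralPolys (q r s : ℕ) (m' : ℤ) :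
    masterPoly5 p q r s m' ∈ integralPolys p (Fin 5) := by
  rw [masterPoly5_eq]
  apply_rules [Subring.mul_mem, Subring.sub_mem, Subring.pow_mem, X_mem_integralPolys,
    truncExpFactor_mem_integralPolys]

lemma pderiv_one_sub_pderiv_two_X_one_sub_X_two {R : Type*} [CommRing R] :
    (pderiv 1 - pderiv 2 : Derivation R (MvPolynomial (Fin 5) R) _) (X 1 - X 2) = 2 := by
  simp [one_add_one_eq_two]

lemma pderiv_one_sub_pderiv_two_X_zero_sub_mul_X_zero_sub {R : Type*} [CommRing R] :
    (pderiv 1 - pderiv 2 : Derivation R (MvPolynomial (Fin 5) R) _) ((X 0 - X 1) * (X 0 - X 2)) =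
      -(X 1 - X 2) := by
  simp [Derivation.leibniz]

lemma pderiv_one_sub_pderiv_two_truncExpFactor (s : ℕ) :
    (pderiv 1 - pderiv 2 : Derivation ℚ_[p] (MvPolynomial (Fin 5) ℚ_[p]) _)
      (truncExpFactor p s) = 0 := by
  simp [truncExpFactor, Derivation.leibniz, Derivation.leibniz_pow]

end MasterPolynomial

theorem master_shift_identity_general
    (p q r k s : ℕ) [Fact p.Prime]
    (hp : p = k * q + 1) (m : ℤ)
    (hpos₁ : 0 < zExp p q r s m) (hpos₂ : 0 < tExp p q r s m) :
    ∀ mon : Fin 5 →₀ ℕ,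
      ‖(((MvPolynomial.X 1 - MvPolynomial.X 2) *
            (MvPolynomial.pderiv 1 (masterPoly5 p q r s m) -
              MvPolynomial.pderiv 2 (masterPoly5 p q r s m)) -
          MvPolynomial.C (2 * ((r : ℚ_[p]) / (q : ℚ_[p]) + (m : ℚ_[p]))) *
            masterPoly5 p q r s m) -
        MvPolynomial.C ((r : ℚ_[p]) / (q : ℚ_[p]) + (m : ℚ_[p])) *
          (MvPolynomial.X 1 - MvPolynomial.X 2) *
          masterPoly5 p q r s (m + 1)).coeff mon‖ ≤ (p : ℝ) ^ (-(s : ℤ)) := by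
  intro mon
  set κ : ℚ_[p] := r / q + m
  obtain ⟨a, ha⟩ : ∃ a : ℕ, zExp p q r s m = a := ⟨_, (Int.toNat_of_nonneg hpos₁.le).symm⟩
  obtain ⟨b, hb⟩ : ∃ b : ℕ, tExp p q r s m = b + 1 := ⟨(tExp p q r s m).toNat - 1, by omega⟩
  have hΦ : masterPoly5 p q r s m =
      truncExpFactor p s * (X 1 - X 2) ^ a * ((X 0 - X 1) * (X 0 - X 2)) ^ (b + 1) := by
    rw [masterPoly5_eq, ha, hb, Int.toNat_natCast, Int.toNat_natCast_add_one]
  have hΦ' : masterPoly5 p q r s (m + 1) =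
      truncExpFactor p s * (X 1 - X 2) ^ (a + 1) * ((X 0 - X 1) * (X 0 - X 2)) ^ b := by
    rw [masterPoly5_eq, zExp_add_one, tExp_add_one, ha, hb, add_sub_cancel_right,
      Int.toNat_natCast, Int.toNat_natCast_add_one]
  have hdiff : ((X 1 - X 2) *
      (pderiv 1 (masterPoly5 p q r s m) - pderiv 2 (masterPoly5 p q r s m)) -
      C (2 * κ) * masterPoly5 p q r s m) - C κ * (X 1 - X 2) * masterPoly5 p q r s (m + 1) =
      C (2 * (zExp p q r s m - κ)) * masterPoly5 p q r s m -
        C (tExp p q r s m + κ) * ((X 1 - X 2) * masterPoly5 p q r s (m + 1)) := by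
    rw [← Derivation.sub_apply, hΦ, hΦ',
      Derivation.mul_apply_mul_pow_mul_pow _ (pderiv_one_sub_pderiv_two_truncExpFactor p s)
        pderiv_one_sub_pderiv_two_X_one_sub_X_two
        pderiv_one_sub_pderiv_two_X_zero_sub_mul_X_zero_sub, ha, hb]
    simp only [map_mul, map_sub, map_add, map_natCast, map_ofNat, Int.cast_add, Int.cast_natCast,
      Int.cast_one, map_one]
    ring
  rw [hdiff]
  exact norm_coeff_C_mul_sub_C_mul_le (masterPoly5_mem_integralPolys p q r s m)
    (Subring.mul_mem _ (Subring.sub_mem _ (X_mem_integralPolys 1) (X_mem_integralPolys 2))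
      (masterPoly5_mem_integralPolys p q r s (m + 1)))
    ((norm_mul_le_of_le (IsUltrametricDist.norm_natCast_le_one ℚ_[p] 2)
      (norm_zExp_sub_le hp r s m)).trans_eq (one_mul _)) (norm_tExp_add_le hp r s m) mon

/-- **Shift identity for the master polynomial.** Under the standing assumptions, with
the positivity conditions holding for both `m` and `m+1`, the congruence
`D_κ Φ_s(t,z,λ,κ) ≡ κ Φ_s(t,z,λ,κ+1) (mod p^s)` holds after multiplying through by
`(z₁−z₂)`, where `D_κ = ∂₁ − ∂₂ − 2κ/(z₁−z₂)` and `κ = r/q + m ∈ ℤ_p`: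
`(z₁−z₂)(∂₁−∂₂)Φ_s(κ) − 2κ·Φ_s(κ) ≡ κ·(z₁−z₂)·Φ_s(κ+1) (mod p^s)`,
i.e. every coefficient of the difference lies in `p^s ℤ_p`. -/
theorem master_shift_identity
    (p q r k s : ℕ) [Fact p.Prime] (hodd : p ≠ 2)
    (hcop : Nat.Coprime r q) (hhalf : q < 2 * r) (hlt : r < q)
    (hk : 0 < k) (hp : p = k * q + 1) (hs : 0 < s) (m : ℤ)
    (hpos₁ : 0 < zExp p q r s m) (hpos₂ : 0 < tExp p q r s m)
    (hpos₃ : 0 < zExp p q r s (m + 1)) (hpos₄ : 0 < tExp p q r s (m + 1)) :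
    ∀ mon : Fin 5 →₀ ℕ,
      ‖(((MvPolynomial.X 1 - MvPolynomial.X 2) *
            (MvPolynomial.pderiv 1 (masterPoly5 p q r s m) -
              MvPolynomial.pderiv 2 (masterPoly5 p q r s m)) -
          MvPolynomial.C (2 * ((r : ℚ_[p]) / (q : ℚ_[p]) + (m : ℚ_[p]))) *
            masterPoly5 p q r s m) -
        MvPolynomial.C ((r : ℚ_[p]) / (q : ℚ_[p]) + (m : ℚ_[p])) *
          (MvPolynomial.X 1 - MvPolynomial.X 2) *
          masterPoly5 p q r s (m + 1)).coeff mon‖ ≤ (p : ℝ) ^ (-(s : ℤ)) :=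
  master_shift_identity_general p q r k s hp m hpos₁ hpos₂
end
end
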